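/- arXiv:1005.1521 — 6 statements merged into one kernel-verified Lean document; each statement's English description precedes it below -/
import Mathlib

section
/- The number of Dyck paths of length 2n with exactly v+1 peaks equals the Narayana number N(n,v) = (1/(v+1)) * C(n,v) * C(n-1,v), for 0 ≤ v ≤ n-1 and n ≥ 1. -/
open Finset
open scoped Classical

/-- Extend a finite step sequence to ℕ (false outside range). -/
def extS {m : ℕ} (s : Fin m → Bool) : ℕ → Bool :=
  fun j => if h : j < m then s ⟨j, h⟩ else false

/-- Number of up-steps (true entries) among the first `k` steps. -/
def upsTo {m : ℕ} (s : Fin m → Bool) (k : ℕ) : ℕ :=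
  ((Finset.range k).filter (fun j => extS s j = true)).card

/-- A bilateral Dyck path of length 2n: a ±1-sequence with sum 0,
encoded as a Bool sequence with exactly n `true`s. -/
def isBilateral (n : ℕ) (s : Fin (2*n) → Bool) : Prop := upsTo s (2*n) = n

/-- A Dyck path of length 2n: sum 0 and all partial sums nonnegative
(`k ≤ 2 * upsTo s k` says #ups ≥ #downs among the first k steps). -/
def isDyck (n : ℕ) (s : Fin (2*n) → Bool) : Prop :=
  upsTo s (2*n) = n ∧ ∀ k ≤ 2*n, k ≤ 2 * upsTo s k

/-- Interior peaks: 1-indexed positions i (1 ≤ i ≤ m-1) with step i up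
and step i+1 down; 0-indexed j = i-1 ranges over `range (m-1)`. -/
def interiorPeaks {m : ℕ} (s : Fin m → Bool) : ℕ :=
  ((Finset.range (m-1)).filter (fun j => extS s j = true ∧ extS s (j+1) = false)).card

/-- Peaks with the boundary convention: the initial vertex is a peak if the
first step is down, the final vertex is a peak if the last step is up. -/
def bPeaks (n : ℕ) (s : Fin (2*n) → Bool) : ℕ :=
  interiorPeaks s + (if extS s 0 = false then 1 else 0)
    + (if extS s (2*n-1) = true then 1 else 0)

/-- Number of up-steps at even 1-indexed positions (odd 0-indexed). -/
def evenUps (n : ℕ) (s : Fin (2*n) → Bool) : ℕ :=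
  ((Finset.range (2*n)).filter (fun j => j % 2 = 1 ∧ extS s j = true)).card

/-- Number of up-steps at odd 1-indexed positions (even 0-indexed). -/
def oddUps (n : ℕ) (s : Fin (2*n) → Bool) : ℕ :=
  ((Finset.range (2*n)).filter (fun j => j % 2 = 0 ∧ extS s j = true)).card

/-- Number of ones (arrows) in a Boolean sequence. -/
def ones {m : ℕ} (f : Fin m → Bool) : ℕ := upsTo f m

/-- 1-indexed position of the h-th one in `f`: the least `k` such that the
first `k` entries contain exactly `h` ones. -/
noncomputable def nthOnePos {m : ℕ} (f : Fin m → Bool) (h : ℕ) : ℕ := sInf {k | upsTo f k = h}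

/-- A checkmark pair of size n. -/
def isCheckPair (n : ℕ) (p : (Fin n → Bool) × (Fin (n-1) → Bool)) : Prop :=
  ones p.1 = ones p.2 ∨ ones p.1 = ones p.2 + 1

/-- A Dyck checkmark pair of size n. -/
def isDyckCheckPair (n : ℕ) (p : (Fin n → Bool) × (Fin (n-1) → Bool)) : Prop :=
  isCheckPair n p ∧ ∀ h, 1 ≤ h → h ≤ ones p.2 → nthOnePos p.2 h < nthOnePos p.1 h

/-- Narayana number N(n,v) = C(n,v)C(n-1,v)/(v+1). -/
def narayana (n v : ℕ) : ℕ := n.choose v * (n-1).choose v / (v + 1)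

/-- The bijection φ: s_NW(i) = 1 iff step 2i-1 (1-indexed) is down;
s_SW(i) = 1 iff step 2i (1-indexed) is up. -/
def phiMap (n : ℕ) (s : Fin (2*n) → Bool) : (Fin n → Bool) × (Fin (n-1) → Bool) :=
  (fun i => ! extS s (2*(i:ℕ)), fun i => extS s (2*(i:ℕ)+1))

/-- Height (#ups − #downs) before step j (0-indexed). -/
def height {m : ℕ} (s : Fin m → Bool) (j : ℕ) : ℤ := 2 * (upsTo s j : ℤ) - j

/-- Step j lies in an odd band: an up-step from even height, or a down-step
from odd height. -/
def inOddBand {m : ℕ} (s : Fin m → Bool) (j : ℕ) : Prop :=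
  (extS s j = true ∧ Even (height s j)) ∨ (extS s j = false ∧ Odd (height s j))
/-!
A Dyck path with `v + 1` peaks is determined by two codes of length `n - 1`: which of its first
`n - 1` up-steps are followed by a down-step, and which of its first `n - 1` down-steps are
followed by an up-step (the last up-step is always a peak). Both codes have `v` ones, and a pair
of such codes comes from a Dyck path exactly when, in every prefix, the first code has at most
as many ones as the second; the path is rebuilt step by step, going up as long as the peaks
completed so far do not outnumber the completed valleys.

The dominated pairs are counted by André's reflection: exchanging the prefixes of a
non-dominated pair up to its first excess is a bijection onto all pairs of a `(v + 1)`-subset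
and a `(v - 1)`-subset of an `(n - 1)`-set. Hence their number is
`C(n-1, v)² - C(n-1, v+1) C(n-1, v-1) = N(n, v)`.
-/

section PrefixCounts

variable {M : ℕ} (s : Fin M → Bool)

lemma extS_of_lt {j : ℕ} (hj : j < M) : extS s j = s ⟨j, hj⟩ := dif_pos hj

lemma extS_of_le {j : ℕ} (hj : M ≤ j) : extS s j = false := dif_neg (by omega)

lemma upsTo_eq_count (k : ℕ) : upsTo s k = Nat.count (fun j => extS s j = true) k :=
  (Nat.count_eq_card_filter_range _ _).symm

@[simp] lemma upsTo_zero : upsTo s 0 = 0 := by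
  simp [upsTo_eq_count]

lemma upsTo_succ (k : ℕ) :
    upsTo s (k + 1) = upsTo s k + if extS s k = true then 1 else 0 := by
  simp only [upsTo_eq_count, Nat.count_succ]

lemma upsTo_succ_of_true {k : ℕ} (h : extS s k = true) : upsTo s (k + 1) = upsTo s k + 1 := by
  simp [upsTo_succ, h]

lemma upsTo_succ_of_false {k : ℕ} (h : extS s k = false) : upsTo s (k + 1) = upsTo s k := by
  simp [upsTo_succ, h]

lemma upsTo_succ_le (k : ℕ) : upsTo s (k + 1) ≤ upsTo s k + 1 := by
  rw [upsTo_succ]; split <;> omega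

lemma upsTo_mono : Monotone (upsTo s) := fun a b hab => by
  simp only [upsTo_eq_count]; exact Nat.count_monotone _ hab

lemma upsTo_lt_upsTo {j k : ℕ} (hj : extS s j = true) (hjk : j < k) : upsTo s j < upsTo s k := by
  simp only [upsTo_eq_count]; exact Nat.count_strict_mono hj hjk

lemma upsTo_le_self (k : ℕ) : upsTo s k ≤ k := by
  rw [upsTo_eq_count]; exact Nat.count_le _

lemma upsTo_of_le {k : ℕ} (hk : M ≤ k) : upsTo s k = ones s := by
  induction k, hk using Nat.le_induction with
  | base => rfl
  | succ k hk ih => rw [upsTo_succ_of_false s (extS_of_le s hk), ih]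

lemma upsTo_le_ones (k : ℕ) : upsTo s k ≤ ones s := by
  rcases le_total M k with h | h
  · exact (upsTo_of_le s h).le
  · exact (upsTo_mono s h).trans (upsTo_of_le s le_rfl).le

lemma exists_upsTo_eq {h L : ℕ} (hh : h ≤ upsTo s L) : ∃ k ≤ L, upsTo s k = h := by
  induction L with
  | zero => exact ⟨0, le_rfl, by simp_all⟩
  | succ L ih =>
    rcases le_or_gt h (upsTo s L) with h1 | h1
    · obtain ⟨k, hk, hk'⟩ := ih h1
      exact ⟨k, by omega, hk'⟩
    · exact ⟨L + 1, le_rfl, by have := upsTo_succ_le s L; omega⟩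

end PrefixCounts

section NthOnePos

variable {M : ℕ} (s : Fin M → Bool)

lemma upsTo_nthOnePos {h : ℕ} (hh : h ≤ ones s) : upsTo s (nthOnePos s h) = h :=
  have ⟨k, _, hk⟩ := exists_upsTo_eq s (L := M) hh
  Nat.sInf_mem (s := {k | upsTo s k = h}) ⟨k, hk⟩

lemma nthOnePos_le_iff {h L : ℕ} (hh : h ≤ ones s) :
    nthOnePos s h ≤ L ↔ h ≤ upsTo s L := by
  constructor
  · intro hL
    exact upsTo_nthOnePos s hh ▸ upsTo_mono s hL
  · intro hL
    obtain ⟨k, hkL, hk⟩ := exists_upsTo_eq s hL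
    exact (Nat.sInf_le (show k ∈ {k | upsTo s k = h} from hk)).trans hkL

lemma nthOnePos_eq {h j : ℕ} (hlt : upsTo s j < h) (heq : upsTo s (j + 1) = h) :
    nthOnePos s h = j + 1 := by
  have hh : h ≤ ones s := heq ▸ upsTo_le_ones s _
  refine le_antisymm ((nthOnePos_le_iff s hh).2 heq.ge) ?_
  by_contra hc
  exact absurd ((nthOnePos_le_iff s hh).1 (by omega : nthOnePos s h ≤ j)) (by omega)

lemma exists_nthOnePos_succ {c : ℕ} (hc : c < ones s) :
    ∃ j < M, nthOnePos s (c + 1) = j + 1 ∧ upsTo s j = c ∧ extS s j = true := by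
  have hmem := upsTo_nthOnePos s (h := c + 1) hc
  obtain ⟨j, hj⟩ : ∃ j, nthOnePos s (c + 1) = j + 1 :=
    Nat.exists_eq_succ_of_ne_zero fun h0 => by simp [h0] at hmem
  have hlt : upsTo s j < c + 1 := by
    by_contra hle
    have := (nthOnePos_le_iff s (h := c + 1) hc).2 (not_lt.1 hle)
    omega
  rw [hj] at hmem
  have hj' : extS s j = true := by
    by_contra hf
    rw [upsTo_succ_of_false s (by simpa using hf)] at hmem
    omega
  refine ⟨j, ?_, hj, by rw [upsTo_succ_of_true s hj'] at hmem; omega, hj'⟩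
  by_contra hM
  rw [extS_of_le s (by omega)] at hj'
  exact absurd hj' (by simp)

end NthOnePos

section PeaksAndValleys

variable {M : ℕ} (s : Fin M → Bool)

def peaksBefore (L : ℕ) : ℕ :=
  Nat.count (fun j => extS s j = true ∧ extS s (j + 1) = false) L

def valleysBefore (L : ℕ) : ℕ :=
  Nat.count (fun j => extS s j = false ∧ extS s (j + 1) = true) L

lemma interiorPeaks_eq_peaksBefore : interiorPeaks s = peaksBefore s (M - 1) :=
  (Nat.count_eq_card_filter_range _ _).symm

/-- Peaks and valleys alternate. -/
lemma peaksBefore_add_ite (L : ℕ) :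
    peaksBefore s L + (if extS s L = true then 1 else 0)
      = valleysBefore s L + if extS s 0 = true then 1 else 0 := by
  induction L with
  | zero => simp [peaksBefore, valleysBefore]
  | succ L ih =>
    simp only [peaksBefore, valleysBefore, Nat.count_succ] at ih ⊢
    cases h : extS s L <;> cases extS s (L + 1) <;> simp [h] at ih ⊢ <;> omega

/-- The `(c + 1)`-st up-step of `s` is followed by a down-step. -/
def IsPeakUp (c : ℕ) : Prop := extS s (nthOnePos s (c + 1)) = false

lemma peaksBefore_eq_count (L : ℕ) : peaksBefore s L = Nat.count (IsPeakUp s) (upsTo s L) := by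
  induction L with
  | zero => simp [peaksBefore]
  | succ L ih =>
    rw [peaksBefore, Nat.count_succ, ← peaksBefore, ih]
    cases hL : extS s L
    · simp [upsTo_succ_of_false s hL]
    · rw [upsTo_succ_of_true s hL, Nat.count_succ, IsPeakUp,
        nthOnePos_eq s (by omega) (upsTo_succ_of_true s hL)]
      simp

def flipSteps : Fin M → Bool := fun i => !s i

lemma extS_flipSteps {j : ℕ} (hj : j < M) : extS (flipSteps s) j = !extS s j := by
  simp [extS_of_lt _ hj, flipSteps]

lemma upsTo_flipSteps {k : ℕ} (hk : k ≤ M) : upsTo (flipSteps s) k = k - upsTo s k := by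
  induction k with
  | zero => simp
  | succ k ih =>
    have := upsTo_le_self s k
    rw [upsTo_succ, upsTo_succ s, extS_flipSteps s (by omega), ih (by omega)]
    cases extS s k <;> simp; omega

lemma valleysBefore_eq_peaksBefore_flipSteps {L : ℕ} (hL : L < M) :
    valleysBefore s L = peaksBefore (flipSteps s) L := by
  simp only [valleysBefore, peaksBefore, Nat.count_eq_card_filter_range]
  congr 1
  refine Finset.filter_congr fun j hj => ?_
  rw [Finset.mem_range] at hj
  rw [extS_flipSteps s (by omega), extS_flipSteps s (by omega)]
  simp

/-- The `(c + 1)`-st down-step of `s` is followed by an up-step. -/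
def IsValleyDown (c : ℕ) : Prop := extS s (nthOnePos (flipSteps s) (c + 1)) = true

lemma valleysBefore_eq_count {L : ℕ} (hL : L < M) :
    valleysBefore s L = Nat.count (IsValleyDown s) (L - upsTo s L) := by
  rw [valleysBefore_eq_peaksBefore_flipSteps s hL, peaksBefore_eq_count,
    upsTo_flipSteps s hL.le]
  simp only [Nat.count_eq_card_filter_range]
  congr 1
  refine Finset.filter_congr fun c hc => ?_
  rw [Finset.mem_range, ← upsTo_flipSteps s hL.le] at hc
  have hle := (nthOnePos_le_iff (flipSteps s) (h := c + 1) (hc.trans_le (upsTo_le_ones _ _))).2 hc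
  rw [IsPeakUp, IsValleyDown, extS_flipSteps s (by omega)]
  simp

end PeaksAndValleys

def Dominated {m : ℕ} (f g : Fin m → Bool) : Prop := ∀ x, upsTo f x ≤ upsTo g x

lemma upsTo_decide_eq_count {k u : ℕ} (φ : ℕ → Prop) [DecidablePred φ] (hu : u ≤ k) :
    upsTo (fun c : Fin k => decide (φ c)) u = Nat.count φ u := by
  rw [upsTo, Nat.count_eq_card_filter_range]
  refine congrArg _ (Finset.filter_congr fun c hc => ?_)
  rw [extS_of_lt _ ((Finset.mem_range.1 hc).trans_le hu), decide_eq_true_iff]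

section Codes

variable (n : ℕ)

/-- Only the first `n - 1` up-steps are recorded: the last one of a Dyck path is always a peak. -/
noncomputable def peakCode (s : Fin (2 * n) → Bool) : Fin (n - 1) → Bool :=
  fun c => decide (IsPeakUp s c)

noncomputable def valleyCode (s : Fin (2 * n) → Bool) : Fin (n - 1) → Bool :=
  fun c => decide (IsValleyDown s c)

variable (f g : Fin (n - 1) → Bool)

/-- After `u` up-steps and `j - u` down-steps, the path rebuilt from the codes `f, g` goes up
iff it has completed no more peaks than valleys. -/
def StepsUp (j u : ℕ) : Prop := u < n ∧ upsTo f u ≤ upsTo g (j - u)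

noncomputable def decodeUps : ℕ → ℕ
  | 0 => 0
  | j + 1 => decodeUps j + if StepsUp n f g j (decodeUps j) then 1 else 0

noncomputable def decode : Fin (2 * n) → Bool :=
  fun i => decide (StepsUp n f g i (decodeUps n f g i))

end Codes

section Encode

variable {n : ℕ} {s : Fin (2 * n) → Bool}

lemma peaksBefore_eq_upsTo_peakCode (s : Fin (2 * n) → Bool) {L : ℕ}
    (hL : upsTo s L ≤ n - 1) :
    peaksBefore s L = upsTo (peakCode n s) (upsTo s L) := by
  rw [peaksBefore_eq_count]
  exact (upsTo_decide_eq_count _ hL).symm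

lemma valleysBefore_eq_upsTo_valleyCode (s : Fin (2 * n) → Bool) {L : ℕ} (hL : L < 2 * n)
    (hd : L - upsTo s L ≤ n - 1) :
    valleysBefore s L = upsTo (valleyCode n s) (L - upsTo s L) := by
  rw [valleysBefore_eq_count s hL]
  exact (upsTo_decide_eq_count _ hd).symm

namespace isDyck

lemma upsTo_le (hs : isDyck n s) (k : ℕ) : upsTo s k ≤ n :=
  (upsTo_le_ones s k).trans hs.1.le

lemma sub_upsTo_le (hs : isDyck n s) {k : ℕ} (hk : k ≤ 2 * n) :
    k - upsTo s k ≤ upsTo s k := by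
  have := hs.2 k hk; omega

lemma upsTo_lt_of_extS (hs : isDyck n s) {j : ℕ} (hj : extS s j = true) : upsTo s j < n := by
  have := hs.upsTo_le (j + 1); rw [upsTo_succ_of_true s hj] at this; omega

lemma extS_zero (hs : isDyck n s) (hn : 1 ≤ n) : extS s 0 = true := by
  by_contra h
  have h1 := upsTo_succ_of_false s (k := 0) (by simpa using h)
  have := hs.2 1 (by omega)
  simp_all

lemma upsTo_two_mul_sub_one (hs : isDyck n s) (hn : 1 ≤ n) : upsTo s (2 * n - 1) = n := by
  have := hs.2 (2 * n - 1) (by omega); have := hs.upsTo_le (2 * n - 1); omega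

lemma extS_two_mul_sub_one (hs : isDyck n s) (hn : 1 ≤ n) : extS s (2 * n - 1) = false := by
  by_contra h
  have := hs.upsTo_lt_of_extS (by simpa using h)
  rw [hs.upsTo_two_mul_sub_one hn] at this
  omega

lemma interiorPeaks_eq (hs : isDyck n s) (hn : 1 ≤ n) :
    interiorPeaks s = ones (peakCode n s) + 1 := by
  have hlast : IsPeakUp s (n - 1) := by
    rw [IsPeakUp, Nat.sub_add_cancel hn]
    by_contra h
    have := hs.upsTo_lt_of_extS (by simpa using h)
    rw [upsTo_nthOnePos s hs.1.ge] at this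
    omega
  have hcount := Nat.count_succ (IsPeakUp s) (n - 1)
  rw [Nat.sub_add_cancel hn, if_pos hlast] at hcount
  rw [interiorPeaks_eq_peaksBefore, peaksBefore_eq_count, hs.upsTo_two_mul_sub_one hn, hcount]
  exact congrArg (· + 1) (upsTo_decide_eq_count _ le_rfl).symm

lemma ones_valleyCode (hs : isDyck n s) (hn : 1 ≤ n) :
    ones (valleyCode n s) = ones (peakCode n s) := by
  have halt := peaksBefore_add_ite s (2 * n - 1)
  rw [hs.extS_two_mul_sub_one hn, hs.extS_zero hn, ← interiorPeaks_eq_peaksBefore,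
    hs.interiorPeaks_eq hn, valleysBefore_eq_upsTo_valleyCode s (by omega)
      (by rw [hs.upsTo_two_mul_sub_one hn]; omega), hs.upsTo_two_mul_sub_one hn,
    show 2 * n - 1 - n = n - 1 by omega] at halt
  simp only [ones] at halt ⊢
  simp at halt
  omega

lemma extS_iff_stepsUp (hs : isDyck n s) (hn : 1 ≤ n) {j : ℕ} (hj : j < 2 * n) :
    extS s j = true ↔ StepsUp n (peakCode n s) (valleyCode n s) j (upsTo s j) := by
  rcases lt_or_ge (upsTo s j) n with hu | hu
  · have hd := hs.sub_upsTo_le hj.le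
    have halt := peaksBefore_add_ite s j
    rw [hs.extS_zero hn, peaksBefore_eq_upsTo_peakCode s (by omega),
      valleysBefore_eq_upsTo_valleyCode s hj (by omega)] at halt
    simp only [StepsUp, hu, true_and]
    cases h : extS s j <;> simp [h] at halt ⊢ <;> omega
  · exact iff_of_false (fun h => absurd (hs.upsTo_lt_of_extS h) (by omega))
      (fun h => absurd h.1 (by omega))

lemma ones_flipSteps (hs : isDyck n s) : ones (flipSteps s) = n := by
  rw [ones, upsTo_flipSteps s le_rfl, hs.1]; omega

lemma dominated (hs : isDyck n s) (hn : 1 ≤ n) : Dominated (peakCode n s) (valleyCode n s) := by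
  intro x
  rcases le_or_gt (n - 1) x with hx | hx
  · rw [upsTo_of_le _ hx, upsTo_of_le _ hx, hs.ones_valleyCode hn]
  have hdowns := hs.ones_flipSteps
  -- `j` is the `(x + 1)`-st down-step
  obtain ⟨j, hj, -, hdj, hjF⟩ := exists_nthOnePos_succ (flipSteps s) (c := x) (by omega)
  rw [extS_flipSteps s hj, Bool.not_eq_true'] at hjF
  rw [upsTo_flipSteps s hj.le] at hdj
  have ha : x + 1 ≤ upsTo s j := by
    have := hs.sub_upsTo_le (k := j + 1) (by omega)
    rw [upsTo_succ_of_false s hjF] at this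
    omega
  -- the last up-step before `j` is a peak
  have hpeak : IsPeakUp s (upsTo s j - 1) := by
    rw [IsPeakUp, Nat.sub_add_cancel (by omega)]
    have hle : nthOnePos s (upsTo s j) ≤ j := (nthOnePos_le_iff s (upsTo_le_ones s j)).2 le_rfl
    by_contra h
    rcases hle.lt_or_eq with hlt | heq
    · have := upsTo_lt_upsTo s (by simpa using h) hlt
      rw [upsTo_nthOnePos s (upsTo_le_ones s j)] at this
      omega
    · rw [heq] at h; simp [hjF] at h
  have halt := peaksBefore_add_ite s j
  rw [hjF, hs.extS_zero hn, peaksBefore_eq_count,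
    valleysBefore_eq_upsTo_valleyCode s hj (by omega), hdj] at halt
  have hcount := Nat.count_succ (IsPeakUp s) (upsTo s j - 1)
  rw [Nat.sub_add_cancel (by omega), if_pos hpeak] at hcount
  have hmono := Nat.count_monotone (IsPeakUp s) (show x ≤ upsTo s j - 1 by omega)
  have hf : upsTo (peakCode n s) x = Nat.count (IsPeakUp s) x := upsTo_decide_eq_count _ hx.le
  simp at halt
  omega

end isDyck

end Encode

section Decode

variable {n : ℕ} (f g : Fin (n - 1) → Bool)

/-- The extra mark at index `n - 1` stands for the last peak and the last descent of a Dyck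
path, which the codes do not record. -/
def markCount (u : ℕ) : ℕ := upsTo f u + if n ≤ u then 1 else 0

lemma markCount_of_lt {u : ℕ} (hu : u < n) : markCount f u = upsTo f u := by
  simp [markCount, hu]

lemma markCount_self : markCount f n = ones f + 1 := by
  simp [markCount, upsTo_of_le f (Nat.sub_le n 1)]

lemma upsTo_le_markCount (u : ℕ) : upsTo f u ≤ markCount f u :=
  Nat.le_add_right _ _

lemma markCount_le (u : ℕ) : markCount f u ≤ ones f + 1 := by
  have := upsTo_le_ones f u
  unfold markCount; split <;> omega

lemma markCount_mono : Monotone (markCount f) := fun a b hab => by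
  have := upsTo_mono f hab
  unfold markCount; split_ifs <;> omega

lemma markCount_succ_le (u : ℕ) : markCount f (u + 1) ≤ markCount f u + 1 := by
  rcases lt_or_ge (u + 1) n with hu | hu
  · rw [markCount_of_lt f hu, markCount_of_lt f (by omega)]
    exact upsTo_succ_le f u
  · have := upsTo_of_le f (show n - 1 ≤ u by omega)
    have := upsTo_of_le f (show n - 1 ≤ u + 1 by omega)
    unfold markCount; split_ifs <;> omega

lemma decodeUps_succ (j : ℕ) :
    decodeUps n f g (j + 1)
      = decodeUps n f g j + if StepsUp n f g j (decodeUps n f g j) then 1 else 0 := rfl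

lemma decodeUps_le_self (j : ℕ) : decodeUps n f g j ≤ j := by
  induction j with
  | zero => rfl
  | succ j ih => rw [decodeUps_succ]; split <;> omega

lemma decodeUps_le (j : ℕ) : decodeUps n f g j ≤ n := by
  induction j with
  | zero => exact Nat.zero_le n
  | succ j ih =>
    rw [decodeUps_succ]
    split
    · next h => exact h.1
    · exact ih

lemma extS_decode {j : ℕ} (hj : j < 2 * n) :
    extS (decode n f g) j = decide (StepsUp n f g j (decodeUps n f g j)) :=
  extS_of_lt _ hj

lemma upsTo_decode {k : ℕ} (hk : k ≤ 2 * n) : upsTo (decode n f g) k = decodeUps n f g k := by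
  induction k with
  | zero => rfl
  | succ k ih =>
    rw [upsTo_succ, ih (by omega), extS_decode f g (by omega), decodeUps_succ]
    simp

/-- Along the rebuilt path, completed peaks never exceed completed valleys by more than one. -/
lemma markCount_decodeUps_le (j : ℕ) :
    markCount f (decodeUps n f g j) ≤ markCount g (j - decodeUps n f g j) + 1 := by
  induction j with
  | zero => simp [decodeUps, markCount]
  | succ j ih =>
    have := decodeUps_le_self f g j
    by_cases h : StepsUp n f g j (decodeUps n f g j)
    · rw [decodeUps_succ, if_pos h,
        show j + 1 - (decodeUps n f g j + 1) = j - decodeUps n f g j by omega]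
      have := markCount_succ_le f (decodeUps n f g j)
      have := markCount_of_lt f h.1
      have := upsTo_le_markCount g (j - decodeUps n f g j)
      have := h.2
      omega
    · rw [decodeUps_succ, if_neg h, add_zero, show j + 1 - decodeUps n f g j
        = j - decodeUps n f g j + 1 by omega]
      exact ih.trans (by gcongr; exact markCount_mono g (Nat.le_succ _))

/-- Along the rebuilt path, completed valleys never exceed completed peaks. -/
lemma markCount_le_markCount_decodeUps (hfg : ones f = ones g) (j : ℕ) :
    markCount g (j - decodeUps n f g j) ≤ markCount f (decodeUps n f g j) := by
  induction j with
  | zero => simp [decodeUps, markCount]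
  | succ j ih =>
    have := decodeUps_le_self f g j
    by_cases h : StepsUp n f g j (decodeUps n f g j)
    · rw [decodeUps_succ, if_pos h,
        show j + 1 - (decodeUps n f g j + 1) = j - decodeUps n f g j by omega]
      exact ih.trans (markCount_mono f (Nat.le_succ _))
    · rw [decodeUps_succ, if_neg h, add_zero, show j + 1 - decodeUps n f g j
        = j - decodeUps n f g j + 1 by omega]
      rcases (decodeUps_le f g j).lt_or_eq with hu | hu
      · have hlt : upsTo g (j - decodeUps n f g j) < upsTo f (decodeUps n f g j) := by
          simpa [StepsUp, hu] using h
        have hd : j - decodeUps n f g j < n := by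
          by_contra hd
          have := markCount_mono g (not_lt.1 hd)
          have := markCount_self g
          have := markCount_of_lt f hu
          have := upsTo_le_ones f (decodeUps n f g j)
          omega
        have := markCount_succ_le g (j - decodeUps n f g j)
        rw [markCount_of_lt f hu, markCount_of_lt g hd] at *
        omega
      · rw [hu, markCount_self, hfg]
        exact markCount_le g _

lemma sub_decodeUps_le (hdom : Dominated f g) {j : ℕ} (hj : j ≤ 2 * n) :
    j - decodeUps n f g j ≤ decodeUps n f g j := by
  induction j with
  | zero => simp
  | succ j ih =>
    have := ih (by omega)
    have := decodeUps_le f g j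
    by_cases h : StepsUp n f g j (decodeUps n f g j)
    · rw [decodeUps_succ, if_pos h]; omega
    · rw [decodeUps_succ, if_neg h]
      by_contra hlt
      have heq : j - decodeUps n f g j = decodeUps n f g j := by omega
      exact h ⟨by omega, by rw [heq]; exact hdom _⟩

lemma decodeUps_two_mul (hdom : Dominated f g) : decodeUps n f g (2 * n) = n := by
  have := sub_decodeUps_le f g hdom le_rfl
  have := decodeUps_le f g (2 * n)
  omega

lemma decode_isDyck (hdom : Dominated f g) : isDyck n (decode n f g) := by
  refine ⟨by rw [upsTo_decode f g le_rfl, decodeUps_two_mul f g hdom], fun k hk => ?_⟩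
  rw [upsTo_decode f g hk]
  have := sub_decodeUps_le f g hdom hk
  have := decodeUps_le_self f g k
  omega

end Decode

section RoundTrip

variable {n : ℕ}

lemma decodeUps_encode {s : Fin (2 * n) → Bool} (hs : isDyck n s) (hn : 1 ≤ n) {j : ℕ}
    (hj : j ≤ 2 * n) : decodeUps n (peakCode n s) (valleyCode n s) j = upsTo s j := by
  induction j with
  | zero => rfl
  | succ j ih =>
    rw [decodeUps_succ, ih (by omega), upsTo_succ]
    exact congrArg _ (if_congr (hs.extS_iff_stepsUp hn (by omega)).symm rfl rfl)

lemma decode_encode {s : Fin (2 * n) → Bool} (hs : isDyck n s) (hn : 1 ≤ n) :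
    decode n (peakCode n s) (valleyCode n s) = s := by
  funext i
  have := hs.extS_iff_stepsUp hn i.isLt
  rw [extS_of_lt s i.isLt, ← decodeUps_encode hs hn i.isLt.le] at this
  rw [Bool.eq_iff_iff, this]
  exact decide_eq_true_iff

variable (f g : Fin (n - 1) → Bool)

lemma peakCode_decode (hfg : ones f = ones g) (hdom : Dominated f g) :
    peakCode n (decode n f g) = f := by
  funext c
  have hψ := decode_isDyck f g hdom
  -- `k` is the `(c + 1)`-st up-step
  obtain ⟨k, hk, hpos, hu, hkU⟩ :=
    exists_nthOnePos_succ (decode n f g) (c := c)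
      (by have : ones (decode n f g) = n := hψ.1; omega)
  rw [upsTo_decode f g hk.le] at hu
  rw [extS_decode f g hk, hu, decide_eq_true_iff] at hkU
  have hK := markCount_le_markCount_decodeUps f g hfg k
  rw [hu, markCount_of_lt f (by omega)] at hK
  have heq : upsTo g (k - c) = upsTo f c :=
    le_antisymm ((upsTo_le_markCount g _).trans hK) hkU.2
  have hu1 : decodeUps n f g (k + 1) = c + 1 := by rw [decodeUps_succ, hu, if_pos hkU]
  have hk1 : k + 1 < 2 * n := by
    by_contra hk1
    have := decodeUps_two_mul f g hdom
    rw [show 2 * n = k + 1 by omega, hu1] at this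
    omega
  have hstep := upsTo_succ f c
  rw [extS_of_lt f c.isLt, Fin.eta] at hstep
  show decide (IsPeakUp _ c) = f c
  rw [IsPeakUp, hpos, extS_decode f g hk1, hu1]
  simp only [StepsUp, show k + 1 - (c + 1) = k - c by omega, heq, hstep]
  cases f c <;> simp; omega

lemma valleyCode_decode (hfg : ones f = ones g) (hdom : Dominated f g) :
    valleyCode n (decode n f g) = g := by
  funext c
  have hψ := decode_isDyck f g hdom
  -- `k` is the `(c + 1)`-st down-step
  obtain ⟨k, hk, hpos, hd, hkD⟩ :=
    exists_nthOnePos_succ (flipSteps (decode n f g)) (c := c) (by rw [hψ.ones_flipSteps]; omega)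
  rw [extS_flipSteps _ hk, Bool.not_eq_true', extS_decode f g hk, decide_eq_false_iff_not] at hkD
  rw [upsTo_flipSteps _ hk.le, upsTo_decode f g hk.le] at hd
  have hu1 : decodeUps n f g (k + 1) = decodeUps n f g k := by
    rw [decodeUps_succ, if_neg hkD, add_zero]
  have hK2 := markCount_decodeUps_le f g k
  rw [hd, markCount_of_lt g (by omega)] at hK2
  have hstep := upsTo_succ g c
  rw [extS_of_lt g c.isLt, Fin.eta] at hstep
  show decide (IsValleyDown _ c) = g c
  rw [IsValleyDown, hpos]
  rcases (decodeUps_le f g k).lt_or_eq with hu | hu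
  · have hlt : upsTo g c < upsTo f (decodeUps n f g k) := by
      simpa [StepsUp, hu, hd] using hkD
    rw [markCount_of_lt f hu] at hK2
    have hk1 : k + 1 < 2 * n := by
      by_contra hk1
      have := decodeUps_two_mul f g hdom
      rw [show 2 * n = k + 1 by omega, hu1] at this
      omega
    rw [extS_decode f g hk1, hu1]
    have := decodeUps_le_self f g k
    rw [StepsUp, show k + 1 - decodeUps n f g k = (c : ℕ) + 1 by omega, hstep]
    cases g c <;> simp [hu] <;> omega
  · rw [hu, markCount_self] at hK2
    have hgc : g c = false := by
      by_contra hgc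
      have := upsTo_le_ones g (c + 1)
      simp at hgc
      simp [hgc] at hstep
      omega
    rw [hgc]
    rcases lt_or_ge (k + 1) (2 * n) with hk1 | hk1
    · rw [extS_decode f g hk1, hu1, hu]
      simp [StepsUp]
    · simp [extS_of_le _ hk1]

end RoundTrip

noncomputable def dominatedPairs (m v : ℕ) : Finset ((Fin m → Bool) × (Fin m → Bool)) :=
  Finset.univ.filter fun p => ones p.1 = v ∧ ones p.2 = v ∧ Dominated p.1 p.2

lemma card_isDyck_interiorPeaks {n : ℕ} (hn : 1 ≤ n) (v : ℕ) :
    ((Finset.univ : Finset (Fin (2 * n) → Bool)).filter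
      (fun s => isDyck n s ∧ interiorPeaks s = v + 1)).card
      = (dominatedPairs (n - 1) v).card := by
  refine Finset.card_nbij' (fun s => (peakCode n s, valleyCode n s)) (fun p => decode n p.1 p.2)
    ?_ ?_ ?_ ?_
  · intro s hs
    simp only [Finset.mem_coe, Finset.mem_filter, Finset.mem_univ, true_and] at hs
    obtain ⟨hs, hpeaks⟩ := hs
    have := hs.interiorPeaks_eq hn
    simp only [dominatedPairs, Finset.mem_coe, Finset.mem_filter, Finset.mem_univ, true_and]
    exact ⟨by omega, by rw [hs.ones_valleyCode hn]; omega, hs.dominated hn⟩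
  · rintro ⟨f, g⟩ hp
    simp only [dominatedPairs, Finset.mem_coe, Finset.mem_filter, Finset.mem_univ,
      true_and] at hp
    obtain ⟨hf, hg, hdom⟩ := hp
    have hψ := decode_isDyck f g hdom
    simp only [Finset.mem_coe, Finset.mem_filter, Finset.mem_univ, true_and]
    rw [hψ.interiorPeaks_eq hn, peakCode_decode f g (hf.trans hg.symm) hdom, hf]
    exact ⟨hψ, rfl⟩
  · intro s hs
    simp only [Finset.mem_coe, Finset.mem_filter, Finset.mem_univ, true_and] at hs
    exact decode_encode hs.1 hn
  · rintro ⟨f, g⟩ hp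
    simp only [dominatedPairs, Finset.mem_coe, Finset.mem_filter, Finset.mem_univ,
      true_and] at hp
    obtain ⟨hf, hg, hdom⟩ := hp
    exact Prod.ext (peakCode_decode f g (hf.trans hg.symm) hdom)
      (valleyCode_decode f g (hf.trans hg.symm) hdom)

section Reflection

variable {m : ℕ}

lemma ones_eq_card (f : Fin m → Bool) :
    ones f = (Finset.univ.filter fun i => f i = true).card := by
  rw [ones, upsTo_eq_count, Nat.count_eq_card_filter_range, Finset.card_filter, Finset.card_filter,
    ← Fin.sum_univ_eq_sum_range]
  simp only [extS_of_lt f (Fin.isLt _), Fin.eta]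

lemma card_ones_eq (v : ℕ) :
    ((Finset.univ : Finset (Fin m → Bool)).filter fun f => ones f = v).card = m.choose v := by
  rw [show m.choose v = (Finset.univ.powersetCard v : Finset (Finset (Fin m))).card by simp]
  refine Finset.card_nbij' (fun f => Finset.univ.filter fun i => f i = true)
    (fun A i => decide (i ∈ A)) ?_ ?_ ?_ ?_
  · intro f hf
    simp_all [ones_eq_card]
  · intro A hA
    simp_all [ones_eq_card]
  · intro f _
    funext i
    simp
  · intro A _
    ext i
    simp

lemma card_ones_eq_ones_eq (a b : ℕ) :
    ((Finset.univ : Finset ((Fin m → Bool) × (Fin m → Bool))).filter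
      fun p => ones p.1 = a ∧ ones p.2 = b).card = m.choose a * m.choose b := by
  rw [← Finset.univ_product_univ,
    Finset.filter_product (p := fun f => ones f = a) (q := fun g => ones g = b),
    Finset.card_product, card_ones_eq, card_ones_eq]

def splice (f g : Fin m → Bool) (x : ℕ) : Fin m → Bool :=
  fun i => if (i : ℕ) < x then f i else g i

lemma extS_splice_of_lt (f g : Fin m → Bool) {x j : ℕ} (hj : j < x) :
    extS (splice f g x) j = extS f j := by
  by_cases hjm : j < m
  · simp [extS_of_lt _ hjm, splice, hj]
  · simp [extS_of_le _ (not_lt.1 hjm)]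

lemma extS_splice_of_le (f g : Fin m → Bool) {x j : ℕ} (hj : x ≤ j) :
    extS (splice f g x) j = extS g j := by
  by_cases hjm : j < m
  · simp [extS_of_lt _ hjm, splice, not_lt.2 hj]
  · simp [extS_of_le _ (not_lt.1 hjm)]

lemma upsTo_splice_of_le (f g : Fin m → Bool) {x y : ℕ} (hy : y ≤ x) :
    upsTo (splice f g x) y = upsTo f y := by
  induction y with
  | zero => simp
  | succ y ih => rw [upsTo_succ, upsTo_succ f, ih (by omega), extS_splice_of_lt f g (by omega)]

lemma upsTo_splice_add (f g : Fin m → Bool) {x y : ℕ} (hx : x ≤ y) :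
    upsTo (splice f g x) y + upsTo g x = upsTo f x + upsTo g y := by
  induction y, hx using Nat.le_induction with
  | base => rw [upsTo_splice_of_le f g le_rfl]
  | succ y hy ih =>
    rw [upsTo_succ, upsTo_succ g, extS_splice_of_le f g hy]
    omega

lemma splice_splice (f g : Fin m → Bool) (x : ℕ) :
    splice (splice f g x) (splice g f x) x = f := by
  funext i
  unfold splice
  split_ifs <;> rfl

noncomputable def firstExcess (p : (Fin m → Bool) × (Fin m → Bool)) : ℕ :=
  sInf {x | upsTo p.2 x < upsTo p.1 x}

noncomputable def reflect (p : (Fin m → Bool) × (Fin m → Bool)) :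
    (Fin m → Bool) × (Fin m → Bool) :=
  (splice p.1 p.2 (firstExcess p), splice p.2 p.1 (firstExcess p))

lemma not_dominated_iff {f g : Fin m → Bool} :
    ¬Dominated f g ↔ ∃ x, upsTo g x < upsTo f x := by
  simp [Dominated]

section NotDominated

variable {p : (Fin m → Bool) × (Fin m → Bool)}

lemma upsTo_firstExcess_lt (hp : ¬Dominated p.1 p.2) :
    upsTo p.2 (firstExcess p) < upsTo p.1 (firstExcess p) :=
  Nat.sInf_mem (not_dominated_iff.1 hp)

lemma upsTo_firstExcess (hp : ¬Dominated p.1 p.2) :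
    upsTo p.1 (firstExcess p) = upsTo p.2 (firstExcess p) + 1 := by
  have hlt := upsTo_firstExcess_lt hp
  obtain ⟨x, hx⟩ : ∃ x, firstExcess p = x + 1 :=
    Nat.exists_eq_succ_of_ne_zero fun h0 => by simp [h0] at hlt
  have hmin : ¬upsTo p.2 x < upsTo p.1 x :=
    Nat.notMem_of_lt_sInf (s := {x | upsTo p.2 x < upsTo p.1 x}) (show x < firstExcess p by omega)
  rw [hx] at hlt ⊢
  have := upsTo_succ_le p.1 x
  have := upsTo_mono p.2 (show x ≤ x + 1 by omega)
  omega

lemma firstExcess_le (hp : ¬Dominated p.1 p.2) : firstExcess p ≤ m := by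
  obtain ⟨x, hx⟩ := not_dominated_iff.1 hp
  rcases le_total x m with hxm | hxm
  · exact (Nat.sInf_le (show x ∈ {x | upsTo p.2 x < upsTo p.1 x} from hx)).trans hxm
  · refine Nat.sInf_le (show upsTo p.2 m < upsTo p.1 m from ?_)
    rwa [upsTo_of_le _ le_rfl, upsTo_of_le _ le_rfl, ← upsTo_of_le p.1 hxm,
      ← upsTo_of_le p.2 hxm]

lemma not_dominated_reflect (hp : ¬Dominated p.1 p.2) :
    ¬Dominated (reflect p).1 (reflect p).2 := by
  refine not_dominated_iff.2 ⟨firstExcess p, ?_⟩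
  rw [reflect, upsTo_splice_of_le _ _ le_rfl, upsTo_splice_of_le _ _ le_rfl]
  exact upsTo_firstExcess_lt hp

lemma firstExcess_reflect (hp : ¬Dominated p.1 p.2) : firstExcess (reflect p) = firstExcess p := by
  have hagree : ∀ y ≤ firstExcess p,
      upsTo (reflect p).1 y = upsTo p.1 y ∧ upsTo (reflect p).2 y = upsTo p.2 y :=
    fun y hy => ⟨upsTo_splice_of_le _ _ hy, upsTo_splice_of_le _ _ hy⟩
  refine le_antisymm (Nat.sInf_le ?_) ?_
  · show upsTo (reflect p).2 (firstExcess p) < upsTo (reflect p).1 (firstExcess p)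
    rw [(hagree _ le_rfl).1, (hagree _ le_rfl).2]
    exact upsTo_firstExcess_lt hp
  · by_contra hlt
    have hbad := upsTo_firstExcess_lt (not_dominated_reflect hp)
    rw [(hagree _ (by omega)).1, (hagree _ (by omega)).2] at hbad
    exact Nat.notMem_of_lt_sInf (s := {x | upsTo p.2 x < upsTo p.1 x})
      (show firstExcess (reflect p) < firstExcess p by omega) hbad

lemma reflect_reflect (hp : ¬Dominated p.1 p.2) : reflect (reflect p) = p := by
  rw [reflect, firstExcess_reflect hp]
  exact Prod.ext (splice_splice _ _ _) (splice_splice _ _ _)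

lemma ones_reflect_fst (hp : ¬Dominated p.1 p.2) : ones (reflect p).1 = ones p.2 + 1 := by
  have := upsTo_splice_add p.1 p.2 (firstExcess_le hp)
  have := upsTo_firstExcess hp
  simp only [ones, reflect] at *
  omega

lemma ones_reflect_snd (hp : ¬Dominated p.1 p.2) : ones (reflect p).2 + 1 = ones p.1 := by
  have := upsTo_splice_add p.2 p.1 (firstExcess_le hp)
  have := upsTo_firstExcess hp
  simp only [ones, reflect] at *
  omega

end NotDominated

lemma card_not_dominated {a b : ℕ} (hab : a ≤ b) :
    ((Finset.univ : Finset ((Fin m → Bool) × (Fin m → Bool))).filter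
      fun p => ones p.1 = a + 1 ∧ ones p.2 = b ∧ ¬Dominated p.1 p.2).card
      = m.choose (b + 1) * m.choose a := by
  rw [← card_ones_eq_ones_eq]
  refine Finset.card_nbij' reflect reflect ?_ ?_ ?_ ?_
  · intro p hp
    simp only [Finset.mem_coe, Finset.mem_filter, Finset.mem_univ, true_and] at hp ⊢
    obtain ⟨h1, h2, hp⟩ := hp
    have := ones_reflect_snd hp
    exact ⟨by rw [ones_reflect_fst hp, h2], by omega⟩
  · intro q hq
    simp only [Finset.mem_coe, Finset.mem_filter, Finset.mem_univ, true_and] at hq ⊢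
    obtain ⟨h1, h2⟩ := hq
    have hq : ¬Dominated q.1 q.2 := fun hdom => by
      have := hdom m
      simp only [ones] at h1 h2
      omega
    have := ones_reflect_snd hq
    exact ⟨by rw [ones_reflect_fst hq, h2], by omega, not_dominated_reflect hq⟩
  · intro p hp
    simp only [Finset.mem_coe, Finset.mem_filter, Finset.mem_univ, true_and] at hp
    exact reflect_reflect hp.2.2
  · intro q hq
    simp only [Finset.mem_coe, Finset.mem_filter, Finset.mem_univ, true_and] at hq
    refine reflect_reflect fun hdom => ?_
    have := hdom m
    simp only [ones] at hq
    omega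

end Reflection

lemma card_dominatedPairs_zero (m : ℕ) : (dominatedPairs m 0).card = 1 := by
  have h := card_ones_eq_ones_eq (m := m) 0 0
  rw [Nat.choose_zero_right, mul_one] at h
  rw [← h, dominatedPairs]
  refine congrArg _ (Finset.filter_congr fun p _ => ?_)
  refine ⟨fun h => ⟨h.1, h.2.1⟩, fun h => ⟨h.1, h.2, fun x => ?_⟩⟩
  have := upsTo_le_ones p.1 x
  omega

lemma card_dominatedPairs_add (m v : ℕ) :
    (dominatedPairs m (v + 1)).card + m.choose (v + 2) * m.choose v
      = m.choose (v + 1) * m.choose (v + 1) := by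
  rw [← card_not_dominated (Nat.le_succ v), ← card_ones_eq_ones_eq, dominatedPairs,
    ← Finset.card_filter_add_card_filter_not (s := Finset.univ.filter
      fun p : (Fin m → Bool) × (Fin m → Bool) => ones p.1 = v + 1 ∧ ones p.2 = v + 1)
      (fun p => Dominated p.1 p.2), Finset.filter_filter, Finset.filter_filter]
  simp only [and_assoc]

lemma add_two_mul_choose_sq (m v : ℕ) :
    (v + 2) * (m.choose (v + 1) * m.choose (v + 1))
      = (v + 2) * (m.choose (v + 2) * m.choose v) + (m + 1).choose (v + 1) * m.choose (v + 1) := by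
  rcases lt_or_ge m (v + 1) with h | h
  · simp [Nat.choose_eq_zero_of_lt h, Nat.choose_eq_zero_of_lt (show m < v + 2 by omega)]
  · have hA := Nat.choose_succ_right_eq m (v + 1)
    have hB := Nat.choose_succ_right_eq m v
    rw [Nat.choose_succ_succ]
    zify [h, (show v ≤ m by omega)] at hA hB ⊢
    linear_combination (-(m.choose v : ℤ)) * hA + (m.choose (v + 1) : ℤ) * hB

lemma succ_mul_card_dominatedPairs (m v : ℕ) :
    (v + 1) * (dominatedPairs m v).card = (m + 1).choose v * m.choose v := by
  cases v with
  | zero => simp [card_dominatedPairs_zero]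
  | succ v =>
    have h := card_dominatedPairs_add m v
    have := add_two_mul_choose_sq m v
    nlinarith

theorem stmt0_general (n v : ℕ) (hn : 1 ≤ n) :
    ((Finset.univ : Finset (Fin (2*n) → Bool)).filter
      (fun s => isDyck n s ∧ interiorPeaks s = v + 1)).card = narayana n v := by
  have h := succ_mul_card_dominatedPairs (n - 1) v
  rw [Nat.sub_add_cancel hn] at h
  rw [card_isDyck_interiorPeaks hn v, narayana, ← h, Nat.mul_div_cancel_left _ v.succ_pos]

theorem stmt0 (n v : ℕ) (hn : 1 ≤ n) (hv : v ≤ n - 1) :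
    ((Finset.univ : Finset (Fin (2*n) → Bool)).filter
      (fun s => isDyck n s ∧ interiorPeaks s = v + 1)).card = narayana n v :=
  stmt0_general n v hn
end

section
/- For n ≥ 1 and 0 ≤ v ≤ n-1, the number of ±1-sequences of length 2n summing to 0 with exactly v up-steps in even-indexed positions equals C(n,v)^2. -/
open Finset
open scoped Classical

lemma card_bool_funs (n k : ℕ) :
    ((Finset.univ : Finset (Fin n → Bool)).filter
      (fun t => ((Finset.range n).filter (fun i => extS t i = true)).card = k)).card
      = n.choose k := by
  have hrhs : n.choose k = (Finset.powersetCard k (Finset.range n)).card := by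
    rw [Finset.card_powersetCard, Finset.card_range]
  rw [hrhs]
  apply Finset.card_bij (fun t _ => (Finset.range n).filter (fun i => extS t i = true))
  · intro t ht
    simp only [Finset.mem_filter, Finset.mem_univ, true_and] at ht
    simp [Finset.mem_powersetCard, ht, Finset.filter_subset]
  · intro t₁ h₁ t₂ h₂ heq
    funext i
    have := Finset.ext_iff.mp heq i.val
    simp only [Finset.mem_filter, Finset.mem_range, i.isLt, true_and, extS] at this
    rcases Bool.eq_false_or_eq_true (t₁ i) with h | h <;>
      rcases Bool.eq_false_or_eq_true (t₂ i) with h' | h' <;> simp_all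
  · intro A hA
    simp only [Finset.mem_powersetCard] at hA
    have key : (Finset.range n).filter
        (fun j => extS (fun i : Fin n => decide (i.val ∈ A)) j = true) = A := by
      ext j
      simp only [Finset.mem_filter, Finset.mem_range, extS]
      constructor
      · rintro ⟨hj, h⟩
        simpa [hj] using h
      · intro hj
        have hjn : j < n := Finset.mem_range.mp (hA.1 hj)
        exact ⟨hjn, by simp [hjn, hj]⟩
    exact ⟨fun i => decide (i.val ∈ A), by
      simp only [Finset.mem_filter, Finset.mem_univ, true_and, key, hA.2], key⟩

lemma evenUps_eq (n : ℕ) (s : Fin (2*n) → Bool) :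
    evenUps n s = ((Finset.range n).filter (fun i => extS s (2*i+1) = true)).card := by
  unfold evenUps
  apply Finset.card_nbij' (fun j => j / 2) (fun i => 2*i+1)
  · intro j hj
    simp only [Finset.mem_coe, Finset.mem_filter, Finset.mem_range] at hj ⊢
    refine ⟨by omega, ?_⟩
    rw [show 2*(j/2)+1 = j by omega]
    exact hj.2.2
  · intro i hi
    simp only [Finset.mem_coe, Finset.mem_filter, Finset.mem_range] at hi ⊢
    exact ⟨by omega, by omega, hi.2⟩
  · intro j hj
    simp only [Finset.mem_coe, Finset.mem_filter, Finset.mem_range] at hj ⊢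
    omega
  · intro i _
    dsimp only
    omega

lemma oddUps_eq (n : ℕ) (s : Fin (2*n) → Bool) :
    oddUps n s = ((Finset.range n).filter (fun i => extS s (2*i) = true)).card := by
  unfold oddUps
  apply Finset.card_nbij' (fun j => j / 2) (fun i => 2*i)
  · intro j hj
    simp only [Finset.mem_coe, Finset.mem_filter, Finset.mem_range] at hj ⊢
    refine ⟨by omega, ?_⟩
    rw [show 2*(j/2) = j by omega]
    exact hj.2.2
  · intro i hi
    simp only [Finset.mem_coe, Finset.mem_filter, Finset.mem_range] at hi ⊢
    exact ⟨by omega, by omega, hi.2⟩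
  · intro j hj
    simp only [Finset.mem_coe, Finset.mem_filter, Finset.mem_range] at hj ⊢
    omega
  · intro i _
    dsimp only
    omega

lemma ups_split (n : ℕ) (s : Fin (2*n) → Bool) :
    upsTo s (2*n) = evenUps n s + oddUps n s := by
  unfold upsTo evenUps oddUps
  have hsplit : (Finset.range (2*n)).filter (fun j => extS s j = true) =
      (Finset.range (2*n)).filter (fun j => j % 2 = 1 ∧ extS s j = true) ∪
      (Finset.range (2*n)).filter (fun j => j % 2 = 0 ∧ extS s j = true) := by
    rw [← Finset.filter_or]
    apply Finset.filter_congr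
    intro j _
    constructor
    · intro h
      rcases Nat.mod_two_eq_zero_or_one j with h2 | h2
      exacts [Or.inr ⟨h2, h⟩, Or.inl ⟨h2, h⟩]
    · rintro (⟨_, h⟩ | ⟨_, h⟩) <;> exact h
  rw [hsplit, Finset.card_union_of_disjoint]
  rw [Finset.disjoint_left]
  intro j hj hj'
  simp only [Finset.mem_filter] at hj hj'
  omega
lemma extS_lt {m : ℕ} (s : Fin m → Bool) (j : ℕ) (h : j < m) : extS s j = s ⟨j, h⟩ :=
  dif_pos h

/-- Split a length-2n sequence into (even-position part, odd-position part). -/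
def fMap (n : ℕ) (s : Fin (2*n) → Bool) : (Fin n → Bool) × (Fin n → Bool) :=
  (fun i => extS s (2*(i:ℕ)), fun i => extS s (2*(i:ℕ)+1))

/-- Interleave two length-n sequences into a length-2n sequence. -/
def gMap (n : ℕ) (p : (Fin n → Bool) × (Fin n → Bool)) : Fin (2*n) → Bool :=
  fun j => if (j:ℕ) % 2 = 0 then extS p.1 ((j:ℕ)/2) else extS p.2 ((j:ℕ)/2)

lemma cnt_fst (n : ℕ) (s : Fin (2*n) → Bool) :
    ((Finset.range n).filter (fun i => extS (fMap n s).1 i = true)).card = oddUps n s := by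
  rw [oddUps_eq]
  congr 1
  apply Finset.filter_congr
  intro i hi
  have hi' := Finset.mem_range.mp hi
  rw [extS_lt _ i hi']
  rfl

lemma cnt_snd (n : ℕ) (s : Fin (2*n) → Bool) :
    ((Finset.range n).filter (fun i => extS (fMap n s).2 i = true)).card = evenUps n s := by
  rw [evenUps_eq]
  congr 1
  apply Finset.filter_congr
  intro i hi
  have hi' := Finset.mem_range.mp hi
  rw [extS_lt _ i hi']
  rfl

lemma gf (n : ℕ) (s : Fin (2*n) → Bool) : gMap n (fMap n s) = s := by
  funext j
  unfold gMap fMap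
  by_cases hj : (j:ℕ) % 2 = 0
  · rw [if_pos hj]
    have h2 : (j:ℕ)/2 < n := by omega
    rw [extS_lt _ _ h2]
    show extS s (2*((j:ℕ)/2)) = s j
    rw [show 2*((j:ℕ)/2) = (j:ℕ) by omega, extS_lt _ _ j.isLt, Fin.eta]
  · rw [if_neg hj]
    have h2 : (j:ℕ)/2 < n := by omega
    rw [extS_lt _ _ h2]
    show extS s (2*((j:ℕ)/2)+1) = s j
    rw [show 2*((j:ℕ)/2)+1 = (j:ℕ) by omega, extS_lt _ _ j.isLt, Fin.eta]

lemma fg (n : ℕ) (p : (Fin n → Bool) × (Fin n → Bool)) : fMap n (gMap n p) = p := by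
  unfold fMap gMap
  refine Prod.ext ?_ ?_ <;> funext i <;> dsimp only
  · have h2 : 2*(i:ℕ) < 2*n := by omega
    rw [extS_lt _ _ h2]
    show (if (2*(i:ℕ)) % 2 = 0 then extS p.1 (2*(i:ℕ)/2) else _) = p.1 i
    rw [if_pos (show (2*(i:ℕ)) % 2 = 0 by omega),
      show 2*(i:ℕ)/2 = (i:ℕ) by omega, extS_lt _ _ i.isLt, Fin.eta]
  · have h2 : 2*(i:ℕ)+1 < 2*n := by omega
    rw [extS_lt _ _ h2]
    show (if (2*(i:ℕ)+1) % 2 = 0 then _ else extS p.2 ((2*(i:ℕ)+1)/2)) = p.2 i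
    rw [if_neg (show ¬ (2*(i:ℕ)+1) % 2 = 0 by omega),
      show (2*(i:ℕ)+1)/2 = (i:ℕ) by omega, extS_lt _ _ i.isLt, Fin.eta]

theorem stmt3 (n v : ℕ) (hn : 1 ≤ n) (hv : v ≤ n - 1) :
    ((Finset.univ : Finset (Fin (2*n) → Bool)).filter
      (fun s => isBilateral n s ∧ evenUps n s = v)).card = (n.choose v) ^ 2 := by
  have hvn : v ≤ n := by omega
  have key : ((Finset.univ : Finset (Fin (2*n) → Bool)).filter
      (fun s => isBilateral n s ∧ evenUps n s = v)).card =
      (((Finset.univ : Finset (Fin n → Bool)).filter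
        (fun t => ((Finset.range n).filter (fun i => extS t i = true)).card = n - v)) ×ˢ
       ((Finset.univ : Finset (Fin n → Bool)).filter
        (fun t => ((Finset.range n).filter (fun i => extS t i = true)).card = v))).card := by
    apply Finset.card_nbij' (fMap n) (gMap n)
    · intro s hs
      simp only [Finset.mem_coe, Finset.mem_filter, Finset.mem_univ, true_and] at hs
      obtain ⟨hb, he⟩ := hs
      have hsplit := ups_split n s
      rw [hb, he] at hsplit
      simp only [Finset.mem_coe, Finset.mem_product, Finset.mem_filter, Finset.mem_univ, true_and]
      exact ⟨by rw [cnt_fst]; omega, by rw [cnt_snd]; exact he⟩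
    · intro p hp
      simp only [Finset.mem_coe, Finset.mem_product, Finset.mem_filter, Finset.mem_univ, true_and] at hp
      obtain ⟨h1, h2⟩ := hp
      have he : evenUps n (gMap n p) = v := by
        rw [← cnt_snd, fg]; exact h2
      have ho : oddUps n (gMap n p) = n - v := by
        rw [← cnt_fst, fg]; exact h1
      simp only [Finset.mem_coe, Finset.mem_filter, Finset.mem_univ, true_and]
      refine ⟨?_, he⟩
      unfold isBilateral
      rw [ups_split, he, ho]
      omega
    · intro s _
      exact gf n s
    · intro p _
      exact fg n p
  rw [key, Finset.card_product, card_bool_funs, card_bool_funs,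
    Nat.choose_symm hvn, sq]
end

section
/- In a path of ±1 steps starting at height 0, a step at position j (indexed from 1) is an up-step in an odd band if and only if it is an up-step and the number of up-steps minus down-steps among positions 1..j-1 is even; moreover, for a path returning to height 0, the total number of odd-band edges equals twice the number of up-steps at odd positions. -/
open Finset
open scoped Classical

lemma parity_height {m : ℕ} (s : Fin m → Bool) (j : ℕ) :
    Even (height s j) ↔ j % 2 = 0 := by
  unfold height
  rw [Int.even_sub]
  constructor
  · intro h
    have : Even ((j : ℤ)) := h.mp ⟨(upsTo s j : ℤ), by ring⟩
    have := (Int.even_coe_nat j).mp this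
    rcases this with ⟨t, ht⟩; omega
  · intro h
    constructor
    · intro _; exact (Int.even_coe_nat j).mpr (Nat.even_iff.mpr h)
    · intro _; exact ⟨(upsTo s j : ℤ), by ring⟩

lemma inOddBand_iff {m : ℕ} (s : Fin m → Bool) (j : ℕ) :
    inOddBand s j ↔ ((j % 2 = 0 ∧ extS s j = true) ∨ (j % 2 = 1 ∧ extS s j = false)) := by
  unfold inOddBand
  rw [← Int.not_even_iff_odd, parity_height]
  cases h : extS s j <;> simp [h] <;> omega

lemma card_odd_range (m : ℕ) :
    ((Finset.range (2*m)).filter (fun j => j % 2 = 1)).card = m := by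
  induction m with
  | zero => simp
  | succ k ih =>
    rw [show 2*(k+1) = (2*k+1)+1 by ring, Finset.range_add_one, Finset.range_add_one,
      Finset.filter_insert, Finset.filter_insert]
    have h1 : ¬ ((2*k) % 2 = 1) := by omega
    have h2 : (2*k+1) % 2 = 1 := by omega
    rw [if_pos h2, if_neg h1, Finset.card_insert_of_notMem (by simp)]
    omega

theorem stmt6 (n : ℕ) (s : Fin (2*n) → Bool) (hs : upsTo s (2*n) = n) :
    (∀ j < 2*n, (extS s j = true ∧ inOddBand s j) ↔
        (extS s j = true ∧ Even (height s j))) ∧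
    ((Finset.range (2*n)).filter (fun j => inOddBand s j)).card
      = 2 * oddUps n s := by
  constructor
  · intro j hj
    constructor
    · rintro ⟨h, h1 | h2⟩
      · exact ⟨h, h1.2⟩
      · rw [h] at h2; exact absurd h2.1 (by simp)
    · intro ⟨h, he⟩; exact ⟨h, Or.inl ⟨h, he⟩⟩
  · have hset : ((Finset.range (2*n)).filter (fun j => inOddBand s j))
        = ((Finset.range (2*n)).filter (fun j => j % 2 = 0 ∧ extS s j = true))
          ∪ ((Finset.range (2*n)).filter (fun j => j % 2 = 1 ∧ extS s j = false)) := by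
      rw [← Finset.filter_or]
      apply Finset.filter_congr
      intro j _
      simp [inOddBand_iff]
    rw [hset, Finset.card_union_of_disjoint]
    swap
    · rw [Finset.disjoint_filter]
      intro j _ h1 h2
      omega
    have h1 : ((Finset.range (2*n)).filter (fun j => j % 2 = 0 ∧ extS s j = true)).card
        = oddUps n s := rfl
    -- split total ups by parity: oddUps + evenUps = n
    have htot : oddUps n s + evenUps n s = n := by
      unfold oddUps evenUps
      have := Finset.card_filter_add_card_filter_not
        (s := (Finset.range (2*n)).filter (fun j => extS s j = true))
        (p := fun j => j % 2 = 0)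
      rw [Finset.filter_filter, Finset.filter_filter] at this
      unfold upsTo at hs
      rw [hs] at this
      have e1 : (Finset.range (2*n)).filter (fun a => extS s a = true ∧ a % 2 = 0)
          = (Finset.range (2*n)).filter (fun j => j % 2 = 0 ∧ extS s j = true) := by
        apply Finset.filter_congr; intro j _; constructor <;> exact fun ⟨a,b⟩ => ⟨b,a⟩
      have e2 : (Finset.range (2*n)).filter (fun a => extS s a = true ∧ ¬ a % 2 = 0)
          = (Finset.range (2*n)).filter (fun j => j % 2 = 1 ∧ extS s j = true) := by
        apply Finset.filter_congr; intro j _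
        constructor
        · exact fun ⟨a,b⟩ => ⟨by omega, a⟩
        · exact fun ⟨a,b⟩ => ⟨b, by omega⟩
      rw [e1, e2] at this
      exact this
    -- split odd positions by up/down: evenUps + oddDowns = n
    have hodd : evenUps n s
        + ((Finset.range (2*n)).filter (fun j => j % 2 = 1 ∧ extS s j = false)).card = n := by
      unfold evenUps
      have := Finset.card_filter_add_card_filter_not
        (s := (Finset.range (2*n)).filter (fun j => j % 2 = 1))
        (p := fun j => extS s j = true)
      rw [Finset.filter_filter, Finset.filter_filter, card_odd_range] at this
      have e2 : (Finset.range (2*n)).filter (fun a => a % 2 = 1 ∧ ¬ extS s a = true)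
          = (Finset.range (2*n)).filter (fun j => j % 2 = 1 ∧ extS s j = false) := by
        apply Finset.filter_congr; intro j _
        constructor
        · exact fun ⟨a,b⟩ => ⟨a, by simpa using b⟩
        · exact fun ⟨a,b⟩ => ⟨a, by simp [b]⟩
      rw [e2] at this
      exact this
    rw [h1]
    omega
end

section
/- There is a bijection between bilateral Dyck paths of length 2n and checkmark pairs of size n, i.e., pairs (s_NW, s_SW) where s_NW ∈ {0,1}^n, s_SW ∈ {0,1}^(n-1), and the number of 1's in s_NW equals the number of 1's in s_SW or exceeds it by exactly one. -/
/-!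
The bijection is the paper's `phiMap`: the steps at odd positions, negated, form `s_NW`, and the
steps at even positions except the last one form `s_SW`. Since a bilateral path has exactly `n`
up-steps, `|s_NW|₁ = |s_SW|₁ + [last step is up]`, so the image is a checkmark pair and the
forgotten last step is recovered from the arrow counts.
-/

open Finset
open scoped Classical

lemma extS_of_lt_s7 {m : ℕ} (s : Fin m → Bool) {j : ℕ} (h : j < m) :
    extS s j = s ⟨j, h⟩ := dif_pos h

lemma upsTo_eq_sum {m : ℕ} (s : Fin m → Bool) (k : ℕ) :
    upsTo s k = ∑ j ∈ range k, (extS s j).toNat := by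
  rw [upsTo, card_filter]
  exact sum_congr rfl fun j _ => by cases extS s j <;> rfl

lemma upsTo_two_mul {m : ℕ} (s : Fin m → Bool) (k : ℕ) :
    upsTo s (2 * k) = ∑ i ∈ range k, ((extS s (2 * i)).toNat + (extS s (2 * i + 1)).toNat) := by
  rw [upsTo_eq_sum]
  induction k with
  | zero => simp
  | succ k ih =>
    rw [show 2 * (k + 1) = 2 * k + 1 + 1 by ring, sum_range_succ, sum_range_succ, ih,
      sum_range_succ, add_assoc]

lemma ones_eq_sum {m : ℕ} (f : Fin m → Bool) : ones f = ∑ i ∈ range m, (extS f i).toNat :=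
  upsTo_eq_sum f m

section phiMap

variable {n : ℕ}

lemma extS_phiMap_fst (s : Fin (2 * n) → Bool) {i : ℕ} (hi : i < n) :
    extS (phiMap n s).1 i = !extS s (2 * i) := extS_of_lt_s7 _ hi

lemma extS_phiMap_snd (s : Fin (2 * n) → Bool) {i : ℕ} (hi : i < n - 1) :
    extS (phiMap n s).2 i = extS s (2 * i + 1) := extS_of_lt_s7 _ hi

lemma ones_phiMap_fst (s : Fin (2 * n) → Bool) :
    ones (phiMap n s).1 = ∑ i ∈ range n, (!extS s (2 * i)).toNat := by
  rw [ones_eq_sum]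
  exact sum_congr rfl fun i hi => by rw [extS_phiMap_fst s (mem_range.1 hi)]

lemma ones_phiMap_snd (s : Fin (2 * n) → Bool) :
    ones (phiMap n s).2 = ∑ i ∈ range (n - 1), (extS s (2 * i + 1)).toNat := by
  rw [ones_eq_sum]
  exact sum_congr rfl fun i hi => by rw [extS_phiMap_snd s (mem_range.1 hi)]

/-- Each odd step is counted either as an up-step or as an NW arrow; each even step but the
last is counted as an up-step exactly when it is an SW arrow. -/
lemma upsTo_add_ones_phiMap_fst (s : Fin (2 * n) → Bool) :
    upsTo s (2 * n) + ones (phiMap n s).1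
      = n + ones (phiMap n s).2 + (extS s (2 * n - 1)).toNat := by
  rcases n with _ | k
  · simp [upsTo, ones, extS]
  have hodd :
      ∑ i ∈ range (k + 1), ((extS s (2 * i)).toNat + (!extS s (2 * i)).toNat) = k + 1 := by
    simp only [show ∀ b : Bool, b.toNat + (!b).toNat = 1 by decide, sum_const, card_range,
      smul_eq_mul, mul_one]
  rw [upsTo_two_mul, ones_phiMap_fst, ones_phiMap_snd, sum_add_distrib, Nat.add_sub_cancel,
    show 2 * (k + 1) - 1 = 2 * k + 1 by omega, sum_range_succ (fun i => (extS s (2 * i + 1)).toNat)]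
  rw [sum_add_distrib] at hodd
  omega

lemma isCheckPair_phiMap {s : Fin (2 * n) → Bool} (hs : isBilateral n s) :
    isCheckPair n (phiMap n s) := by
  have h := upsTo_add_ones_phiMap_fst s
  have := Bool.toNat_le (extS s (2 * n - 1))
  rw [hs] at h
  unfold isCheckPair
  omega

lemma extS_two_mul_sub_one_eq_decide {s : Fin (2 * n) → Bool} (hs : isBilateral n s) :
    extS s (2 * n - 1) = decide (ones (phiMap n s).1 = ones (phiMap n s).2 + 1) := by
  have h := upsTo_add_ones_phiMap_fst s
  rw [hs] at h
  cases hb : extS s (2 * n - 1) <;> simp only [hb, Bool.toNat_false, Bool.toNat_true] at h <;>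
    simp only [false_eq_decide_iff, true_eq_decide_iff] <;> omega

def phiInv (n : ℕ) (p : (Fin n → Bool) × (Fin (n - 1) → Bool)) : Fin (2 * n) → Bool :=
  fun j => if (j : ℕ) % 2 = 0 then !extS p.1 (j / 2)
    else if (j : ℕ) = 2 * n - 1 then decide (ones p.1 = ones p.2 + 1)
    else extS p.2 (j / 2)

variable (p : (Fin n → Bool) × (Fin (n - 1) → Bool))

lemma extS_phiInv_two_mul {i : ℕ} (hi : i < n) : extS (phiInv n p) (2 * i) = !extS p.1 i := by
  simp [extS_of_lt_s7 _ (show 2 * i < 2 * n by omega), phiInv]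

lemma extS_phiInv_two_mul_add_one {i : ℕ} (hi : i < n - 1) :
    extS (phiInv n p) (2 * i + 1) = extS p.2 i := by
  simp [extS_of_lt_s7 _ (show 2 * i + 1 < 2 * n by omega), phiInv, Nat.add_mod,
    show 2 * i + 1 ≠ 2 * n - 1 by omega, show (2 * i + 1) / 2 = i by omega]

lemma extS_phiInv_two_mul_sub_one :
    extS (phiInv n p) (2 * n - 1) = decide (ones p.1 = ones p.2 + 1) := by
  rcases n with _ | k
  · simp [extS, ones, upsTo]
  simp [extS, phiInv, show (2 * (k + 1) - 1) % 2 = 1 by omega]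

lemma phiMap_phiInv : phiMap n (phiInv n p) = p := by
  refine Prod.ext (funext fun i => ?_) (funext fun i => ?_)
  · show (!extS (phiInv n p) (2 * i)) = p.1 i
    rw [extS_phiInv_two_mul _ i.isLt, Bool.not_not, extS_of_lt_s7 _ i.isLt]
  · show extS (phiInv n p) (2 * i + 1) = p.2 i
    rw [extS_phiInv_two_mul_add_one _ i.isLt, extS_of_lt_s7 _ i.isLt]

lemma isBilateral_phiInv (hp : isCheckPair n p) : isBilateral n (phiInv n p) := by
  have h := upsTo_add_ones_phiMap_fst (phiInv n p)
  rw [phiMap_phiInv, extS_phiInv_two_mul_sub_one] at h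
  unfold isBilateral
  rcases hp with hp | hp <;>
    simp only [hp, Nat.left_eq_add, one_ne_zero, decide_false, decide_true, Bool.toNat_false,
      Bool.toNat_true] at h <;> omega

lemma phiInv_phiMap {s : Fin (2 * n) → Bool} (hs : isBilateral n s) :
    phiInv n (phiMap n s) = s := by
  funext ⟨j, hj⟩
  rw [← extS_of_lt_s7 s hj, ← extS_of_lt_s7 (phiInv n (phiMap n s)) hj]
  obtain ⟨i, rfl | rfl⟩ := Nat.even_or_odd' j
  · rw [extS_phiInv_two_mul _ (by omega), extS_phiMap_fst _ (by omega), Bool.not_not]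
  rcases (show i < n - 1 ∨ 2 * i + 1 = 2 * n - 1 by omega) with hi | hlast
  · rw [extS_phiInv_two_mul_add_one _ hi, extS_phiMap_snd _ hi]
  · rw [hlast, extS_phiInv_two_mul_sub_one, extS_two_mul_sub_one_eq_decide hs]

end phiMap

theorem stmt7 (n : ℕ) :
    Nonempty ({s : Fin (2*n) → Bool // isBilateral n s} ≃
      {p : (Fin n → Bool) × (Fin (n-1) → Bool) // isCheckPair n p}) :=
  ⟨{ toFun := fun s => ⟨phiMap n s, isCheckPair_phiMap s.2⟩
     invFun := fun p => ⟨phiInv n p, isBilateral_phiInv p.1 p.2⟩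
     left_inv := fun s => Subtype.ext (phiInv_phiMap s.2)
     right_inv := fun p => Subtype.ext (phiMap_phiInv p.1) }⟩
end

section
/- There is a weight-preserving bijection φ on Dyck paths of length 2n such that if p has exactly v up-steps at even positions, then φ(p) has exactly v+1 peaks (where the final vertex counts as a peak if the last step is up, and a Dyck path's last step is always down, so peaks are interior); consequently, the number of Dyck paths of length 2n with v even-position up-steps equals the number of Dyck paths of length 2n with v+1 peaks. -/
open Finset
open scoped Classical

/-!
Cut a nonempty Dyck path at its first return to the axis, `s = U p D q`. The even-position
up-steps of `s` are the odd-position ones of `p` plus the even-position ones of `q`; its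
odd-position up-steps are one more than the even-position ones of `p` plus the odd-position
ones of `q`; its peaks are those of `p` plus those of `q`, provided the peaks of `p` are
counted with the convention (`bPeaks`) that gives the empty path one peak.
So the generating polynomials `E n`, `O n`, `I n`, `Ĩ n` of these four statistics satisfy
`E (n+1) = ∑ O a * E b`, `O (n+1) = ∑ X * E a * O b` and `I (n+1) = ∑ Ĩ a * I b` over
`a + b = n`, with `Ĩ n = I n` for `n ≥ 1`. Strong induction gives `O n = I n` and
`X * E n = Ĩ n`; comparing coefficients of `X ^ (v + 1)` proves the theorem.
-/

open Polynomial

namespace DyckPath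

section Steps

variable {m : ℕ} (s : Fin m → Bool)

lemma extS_of_lt {j : ℕ} (h : j < m) : extS s j = s ⟨j, h⟩ := dif_pos h

lemma extS_of_le {j : ℕ} (h : m ≤ j) : extS s j = false := dif_neg (by omega)

lemma upsTo_zero : upsTo s 0 = 0 := rfl

lemma upsTo_succ (k : ℕ) :
    upsTo s (k + 1) = upsTo s k + if extS s k = true then 1 else 0 := by
  rw [upsTo, upsTo, range_add_one, filter_insert]
  split_ifs <;> simp [card_insert_of_notMem]

lemma upsTo_eq_of_length_le {k : ℕ} (h : m ≤ k) : upsTo s k = upsTo s m := by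
  induction k, h using Nat.le_induction with
  | base => rfl
  | succ k hk ih => simp [upsTo_succ, extS_of_le s hk, ih]

/-- Unlike `interiorPeaks`, this also counts a final up-step as a peak, which makes it additive
under `elevateAppend` without side conditions. -/
def peakCount : ℕ :=
  ((range m).filter fun j => extS s j = true ∧ extS s (j + 1) = false).card

lemma peakCount_eq_interiorPeaks_add :
    peakCount s = interiorPeaks s + if extS s (m - 1) = true then 1 else 0 := by
  rcases m with _ | m
  · simp [peakCount, interiorPeaks, extS_of_le s le_rfl]
  · rw [peakCount, interiorPeaks, range_add_one, filter_insert, extS_of_le s le_rfl]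
    split_ifs <;> simp_all [card_insert_of_notMem]

lemma bPeaks_eq_peakCount_add {n : ℕ} (s : Fin (2 * n) → Bool) :
    bPeaks n s = peakCount s + if extS s 0 = false then 1 else 0 := by
  rw [bPeaks, peakCount_eq_interiorPeaks_add]
  ring

end Steps

lemma extS_last_of_isDyck {n : ℕ} {s : Fin (2 * n) → Bool} (hs : isDyck n s) :
    extS s (2 * n - 1) = false := by
  rcases n with _ | n
  · exact extS_of_le s le_rfl
  have hstep := upsTo_succ s (2 * n + 1)
  have hpre := hs.2 (2 * n + 1) (by omega)
  rw [show 2 * n + 1 + 1 = 2 * (n + 1) by ring, hs.1] at hstep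
  rw [show 2 * (n + 1) - 1 = 2 * n + 1 by omega]
  cases h : extS s (2 * n + 1)
  · rfl
  · simp [h] at hstep
    omega

lemma extS_zero_of_isDyck {n : ℕ} {s : Fin (2 * (n + 1)) → Bool} (hs : isDyck (n + 1) s) :
    extS s 0 = true := by
  have hpre := hs.2 1 (by omega)
  rw [upsTo_succ, upsTo_zero] at hpre
  cases h : extS s 0
  · simp [h] at hpre
  · rfl

lemma interiorPeaks_eq_peakCount {n : ℕ} {s : Fin (2 * n) → Bool} (hs : isDyck n s) :
    interiorPeaks s = peakCount s := by
  simp [peakCount_eq_interiorPeaks_add, extS_last_of_isDyck hs]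

lemma bPeaks_eq_interiorPeaks {n : ℕ} {s : Fin (2 * (n + 1)) → Bool} (hs : isDyck (n + 1) s) :
    bPeaks (n + 1) s = interiorPeaks s := by
  simp [bPeaks, extS_zero_of_isDyck hs, extS_last_of_isDyck hs]

noncomputable def firstReturn {m : ℕ} (s : Fin m → Bool) : ℕ :=
  sInf {c | upsTo s (2 * c + 2) = c + 1}

lemma firstReturn_eq_iff {m n a : ℕ} {s : Fin m → Bool} (hn : upsTo s (2 * n + 2) = n + 1) :
    firstReturn s = a
      ↔ upsTo s (2 * a + 2) = a + 1 ∧ ∀ c < a, upsTo s (2 * c + 2) ≠ c + 1 := by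
  let S : Set ℕ := {c | upsTo s (2 * c + 2) = c + 1}
  have hS : S.Nonempty := ⟨n, hn⟩
  change sInf S = a ↔ a ∈ S ∧ ∀ c < a, c ∉ S
  constructor
  · rintro rfl
    exact ⟨Nat.sInf_mem hS, fun c hc => Nat.notMem_of_lt_sInf hc⟩
  · rintro ⟨ha, hmin⟩
    exact le_antisymm (Nat.sInf_le ha) (not_lt.1 fun h => hmin _ h (Nat.sInf_mem hS))

lemma firstReturn_le {m n : ℕ} {s : Fin m → Bool} (hn : upsTo s (2 * n + 2) = n + 1) :
    firstReturn s ≤ n :=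
  Nat.sInf_le hn

def innerPath (a : ℕ) {m : ℕ} (s : Fin m → Bool) : Fin (2 * a) → Bool :=
  fun i => extS s (i + 1)

def tailPath (a b : ℕ) {m : ℕ} (s : Fin m → Bool) : Fin (2 * b) → Bool :=
  fun i => extS s (2 * a + 2 + i)

lemma sum_range_two_mul_add_two_mul_add_two {M : Type*} [AddCommMonoid M] (f : ℕ → M)
    (a b : ℕ) :
    ∑ j ∈ range (2 * a + 2 * b + 2), f j
      = f 0 + ∑ j ∈ range (2 * a), f (j + 1) + f (2 * a + 1)
        + ∑ j ∈ range (2 * b), f (2 * a + 2 + j) := by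
  rw [show 2 * a + 2 * b + 2 = 2 * a + 1 + 1 + 2 * b by ring, sum_range_add, sum_range_succ,
    sum_range_succ']
  abel

section Elevate

variable {a b : ℕ} (p : Fin (2 * a) → Bool) (q : Fin (2 * b) → Bool)

/-- The path `U p D q`; its down-step at index `2 * a + 1` is `extS p (2 * a) = false`. -/
def elevateSeq : ℕ → Bool
  | 0 => true
  | j + 1 => if j ≤ 2 * a then extS p j else extS q (j - (2 * a + 1))

def elevateAppend {m : ℕ} : Fin m → Bool := fun i => elevateSeq p q i

lemma elevateSeq_zero : elevateSeq p q 0 = true := rfl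

lemma elevateSeq_succ_of_le {j : ℕ} (hj : j ≤ 2 * a) : elevateSeq p q (j + 1) = extS p j :=
  if_pos hj

lemma elevateSeq_succ_of_lt {j : ℕ} (hj : 2 * a < j) :
    elevateSeq p q (j + 1) = extS q (j - (2 * a + 1)) :=
  if_neg (by omega)

lemma elevateSeq_two_mul_add_one : elevateSeq p q (2 * a + 1) = false := by
  rw [elevateSeq_succ_of_le p q le_rfl, extS_of_le p le_rfl]

lemma elevateSeq_add (j : ℕ) : elevateSeq p q (2 * a + 2 + j) = extS q j := by
  rw [show 2 * a + 2 + j = 2 * a + 1 + j + 1 by omega, elevateSeq_succ_of_lt p q (by omega)]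
  congr 1
  omega

variable {n : ℕ}

lemma extS_elevateAppend (h : a + b = n) (j : ℕ) :
    extS (elevateAppend p q : Fin (2 * (n + 1)) → Bool) j = elevateSeq p q j := by
  by_cases hj : j < 2 * (n + 1)
  · exact extS_of_lt _ hj
  · obtain ⟨i, rfl⟩ := Nat.exists_eq_add_of_le (by omega : 2 * a + 2 ≤ j)
    rw [extS_of_le _ (by omega), elevateSeq_add, extS_of_le q (by omega)]

lemma upsTo_elevateAppend (h : a + b = n) (k : ℕ) :
    upsTo (elevateAppend p q : Fin (2 * (n + 1)) → Bool) (k + 1)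
      = 1 + upsTo p k + upsTo q (k - (2 * a + 1)) := by
  induction k with
  | zero => simp [upsTo_succ, upsTo_zero, extS_elevateAppend p q h, elevateSeq_zero]
  | succ k ih =>
    rw [upsTo_succ, ih, extS_elevateAppend p q h, upsTo_succ p]
    by_cases hk : k ≤ 2 * a
    · rw [elevateSeq_succ_of_le p q hk, Nat.sub_eq_zero_of_le (by omega : k ≤ 2 * a + 1),
        Nat.sub_eq_zero_of_le (by omega : k + 1 ≤ 2 * a + 1)]
      ring
    · rw [elevateSeq_succ_of_lt p q (by omega), extS_of_le p (by omega),
        show k + 1 - (2 * a + 1) = k - (2 * a + 1) + 1 by omega, upsTo_succ q]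
      simp only [Bool.false_eq_true, if_false]
      ring

lemma upsTo_elevateAppend_of_le (h : a + b = n) {k : ℕ} (hk : k ≤ 2 * a) :
    upsTo (elevateAppend p q : Fin (2 * (n + 1)) → Bool) (k + 1) = 1 + upsTo p k := by
  rw [upsTo_elevateAppend p q h, Nat.sub_eq_zero_of_le (by omega), upsTo_zero, add_zero]

lemma upsTo_elevateAppend_add (h : a + b = n) (k : ℕ) :
    upsTo (elevateAppend p q : Fin (2 * (n + 1)) → Bool) (2 * a + 2 + k)
      = 1 + upsTo p (2 * a) + upsTo q k := by
  rw [show 2 * a + 2 + k = 2 * a + 1 + k + 1 by omega, upsTo_elevateAppend p q h,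
    upsTo_eq_of_length_le p (by omega : 2 * a ≤ 2 * a + 1 + k),
    show 2 * a + 1 + k - (2 * a + 1) = k by omega]

lemma isDyck_elevateAppend_iff (h : a + b = n) :
    (isDyck (n + 1) (elevateAppend p q)
        ∧ firstReturn (elevateAppend p q : Fin (2 * (n + 1)) → Bool) = a)
      ↔ isDyck a p ∧ isDyck b q := by
  have low := fun k (hk : k ≤ 2 * a) => upsTo_elevateAppend_of_le p q h hk
  have high := upsTo_elevateAppend_add p q h
  have hret := high 0
  rw [add_zero, upsTo_zero, add_zero] at hret
  have hlast := high (2 * b)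
  rw [show 2 * a + 2 + 2 * b = 2 * (n + 1) by omega] at hlast
  constructor
  · rintro ⟨⟨htot, hpre⟩, hfirst⟩
    obtain ⟨hfr, hmin⟩ := (firstReturn_eq_iff htot).1 hfirst
    have hpa : upsTo p (2 * a) = a := by omega
    refine ⟨⟨hpa, fun k hk => ?_⟩, ⟨by omega, fun k hk => ?_⟩⟩
    · rcases Nat.even_or_odd' k with ⟨c, rfl | rfl⟩
      · have := hpre (2 * c + 1) (by omega)
        have := low (2 * c) hk
        omega
      · have := hpre (2 * c + 2) (by omega)
        have := hmin c (by omega)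
        have := low (2 * c + 1) hk
        rw [show 2 * c + 1 + 1 = 2 * c + 2 by ring] at this
        omega
    · have := hpre (2 * a + 2 + k) (by omega)
      have := high k
      omega
  · rintro ⟨⟨hpa, hp⟩, ⟨hqb, hq⟩⟩
    have htot : upsTo (elevateAppend p q : Fin (2 * (n + 1)) → Bool) (2 * (n + 1)) = n + 1 := by
      omega
    refine ⟨⟨htot, fun k hk => ?_⟩,
      (firstReturn_eq_iff htot).2 ⟨by omega, fun c hc => ?_⟩⟩
    · by_cases hka : k ≤ 2 * a + 1
      · rcases k with _ | j
        · omega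
        have := low j (by omega)
        have := hp j (by omega)
        omega
      · obtain ⟨i, rfl⟩ := Nat.exists_eq_add_of_le (by omega : 2 * a + 2 ≤ k)
        have := high i
        have := hq i (by omega)
        omega
    · have := hp (2 * c + 1) (by omega)
      have := low (2 * c + 1) (by omega)
      rw [show 2 * c + 1 + 1 = 2 * c + 2 by ring] at this
      omega

lemma innerPath_elevateAppend (h : a + b = n) :
    innerPath a (elevateAppend p q : Fin (2 * (n + 1)) → Bool) = p := by
  funext i
  rw [innerPath, extS_elevateAppend p q h, elevateSeq_succ_of_le p q (by omega),
    extS_of_lt p i.isLt]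

lemma tailPath_elevateAppend (h : a + b = n) :
    tailPath a b (elevateAppend p q : Fin (2 * (n + 1)) → Bool) = q := by
  funext i
  rw [tailPath, extS_elevateAppend p q h, elevateSeq_add, extS_of_lt q i.isLt]

lemma evenUps_elevateAppend (h : a + b = n) :
    evenUps (n + 1) (elevateAppend p q) = oddUps a p + evenUps b q := by
  simp only [evenUps, oddUps, card_filter]
  rw [show range (2 * (n + 1)) = range (2 * a + 2 * b + 2) by congr 1; omega,
    sum_range_two_mul_add_two_mul_add_two]
  simp only [extS_elevateAppend p q h, elevateSeq_zero, elevateSeq_two_mul_add_one,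
    elevateSeq_add, Bool.false_eq_true, and_false, if_false, add_zero]
  rw [if_neg (by omega), zero_add]
  congr 1 <;> refine sum_congr rfl fun j hj => if_congr ?_ rfl rfl
  · rw [elevateSeq_succ_of_le p q (by simp at hj; omega)]
    exact and_congr_left' (by omega)
  · exact and_congr_left' (by omega)

lemma oddUps_elevateAppend (h : a + b = n) :
    oddUps (n + 1) (elevateAppend p q) = 1 + evenUps a p + oddUps b q := by
  simp only [evenUps, oddUps, card_filter]
  rw [show range (2 * (n + 1)) = range (2 * a + 2 * b + 2) by congr 1; omega,
    sum_range_two_mul_add_two_mul_add_two]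
  simp only [extS_elevateAppend p q h, elevateSeq_zero, elevateSeq_two_mul_add_one,
    elevateSeq_add, Bool.false_eq_true, and_false, if_false, add_zero, and_self, if_true]
  congr 1
  · congr 1
    refine sum_congr rfl fun j hj => if_congr ?_ rfl rfl
    rw [elevateSeq_succ_of_le p q (by simp at hj; omega)]
    exact and_congr_left' (by omega)
  · exact sum_congr rfl fun j _ => if_congr (and_congr_left' (by omega)) rfl rfl

lemma peakCount_elevateAppend (h : a + b = n) :
    peakCount (elevateAppend p q : Fin (2 * (n + 1)) → Bool)
      = (if extS p 0 = false then 1 else 0) + peakCount p + peakCount q := by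
  simp only [peakCount, card_filter]
  rw [show range (2 * (n + 1)) = range (2 * a + 2 * b + 2) by congr 1; omega,
    sum_range_two_mul_add_two_mul_add_two]
  simp only [extS_elevateAppend p q h, elevateSeq_zero, elevateSeq_two_mul_add_one,
    elevateSeq_add, Bool.false_eq_true, false_and, if_false, add_zero, true_and,
    elevateSeq_succ_of_le p q (Nat.zero_le _)]
  congr 1
  · congr 1
    refine sum_congr rfl fun j hj => ?_
    rw [mem_range] at hj
    rw [elevateSeq_succ_of_le p q (by omega), elevateSeq_succ_of_le p q (by omega)]
  · refine sum_congr rfl fun j _ => ?_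
    rw [show 2 * a + 2 + j + 1 = 2 * a + 2 + (j + 1) by ring, elevateSeq_add]

lemma interiorPeaks_elevateAppend (h : a + b = n) (hp : isDyck a p) (hq : isDyck b q) :
    interiorPeaks (elevateAppend p q : Fin (2 * (n + 1)) → Bool)
      = bPeaks a p + interiorPeaks q := by
  rw [interiorPeaks_eq_peakCount ((isDyck_elevateAppend_iff p q h).2 ⟨hp, hq⟩).1,
    peakCount_elevateAppend p q h, interiorPeaks_eq_peakCount hq, bPeaks_eq_peakCount_add]
  ring

end Elevate

lemma elevateAppend_innerPath_tailPath {a b n : ℕ} (h : a + b = n)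
    {s : Fin (2 * (n + 1)) → Bool} (hs : isDyck (n + 1) s) (hfirst : firstReturn s = a) :
    elevateAppend (innerPath a s) (tailPath a b s) = s := by
  obtain ⟨hret, -⟩ := (firstReturn_eq_iff hs.1).1 hfirst
  have hdown : extS s (2 * a + 1) = false := by
    have hstep := upsTo_succ s (2 * a + 1)
    have hpre := hs.2 (2 * a + 1) (by omega)
    cases hx : extS s (2 * a + 1)
    · rfl
    · rw [show 2 * a + 1 + 1 = 2 * a + 2 by ring, hret] at hstep
      simp [hx] at hstep
      omega
  funext ⟨j, hj⟩
  rw [← extS_of_lt s hj]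
  change elevateSeq _ _ j = _
  rcases j with _ | j
  · exact (extS_zero_of_isDyck hs).symm
  by_cases hja : j < 2 * a
  · rw [elevateSeq_succ_of_le _ _ hja.le, extS_of_lt _ hja]
    rfl
  by_cases hja' : j = 2 * a
  · rw [hja', elevateSeq_two_mul_add_one, hdown]
  · rw [elevateSeq_succ_of_lt _ _ (by omega), extS_of_lt _ (by omega)]
    change extS s (2 * a + 2 + (j - (2 * a + 1))) = _
    congr 1
    omega

noncomputable def dyckPaths (n : ℕ) : Finset (Fin (2 * n) → Bool) := univ.filter (isDyck n)

lemma mem_dyckPaths {n : ℕ} {s : Fin (2 * n) → Bool} : s ∈ dyckPaths n ↔ isDyck n s := by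
  simp [dyckPaths]

lemma sum_dyckPaths_succ {M : Type*} [AddCommMonoid M] (n : ℕ)
    (g : (Fin (2 * (n + 1)) → Bool) → M) :
    ∑ s ∈ dyckPaths (n + 1), g s
      = ∑ x ∈ antidiagonal n, ∑ p ∈ dyckPaths x.1, ∑ q ∈ dyckPaths x.2,
          g (elevateAppend p q) := by
  rw [← sum_fiberwise_of_maps_to (g := fun s => (firstReturn s, n - firstReturn s))
    (t := antidiagonal n) fun s hs => by
      have := firstReturn_le (mem_dyckPaths.1 hs).1
      simp only [HasAntidiagonal.mem_antidiagonal]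
      omega]
  refine sum_congr rfl fun ⟨a, b⟩ hab => ?_
  rw [HasAntidiagonal.mem_antidiagonal] at hab
  dsimp only at hab ⊢
  have hfiber : ∀ s : Fin (2 * (n + 1)) → Bool,
      s ∈ (dyckPaths (n + 1)).filter (fun s => (firstReturn s, n - firstReturn s) = (a, b))
        ↔ isDyck (n + 1) s ∧ firstReturn s = a := by
    intro s
    simp only [mem_filter, mem_dyckPaths, Prod.mk.injEq]
    constructor
    · rintro ⟨hs, hfa, -⟩
      exact ⟨hs, hfa⟩
    · rintro ⟨hs, hfa⟩
      exact ⟨hs, hfa, by omega⟩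
  rw [← sum_product']
  symm
  refine sum_nbij' (fun x => elevateAppend x.1 x.2) (fun s => (innerPath a s, tailPath a b s))
    ?_ ?_ ?_ ?_ fun _ _ => rfl
  · rintro ⟨p, q⟩ hpq
    rw [mem_product, mem_dyckPaths, mem_dyckPaths] at hpq
    exact (hfiber _).2 ((isDyck_elevateAppend_iff p q hab).2 hpq)
  · intro s hs
    rw [hfiber] at hs
    rw [mem_product, mem_dyckPaths, mem_dyckPaths,
      ← isDyck_elevateAppend_iff _ _ hab, elevateAppend_innerPath_tailPath hab hs.1 hs.2]
    exact hs
  · rintro ⟨p, q⟩ -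
    rw [innerPath_elevateAppend p q hab, tailPath_elevateAppend p q hab]
  · intro s hs
    rw [hfiber] at hs
    exact elevateAppend_innerPath_tailPath hab hs.1 hs.2

noncomputable def dyckPoly (n : ℕ) (f : (Fin (2 * n) → Bool) → ℕ) : ℕ[X] :=
  ∑ s ∈ dyckPaths n, X ^ f s

lemma coeff_dyckPoly (n : ℕ) (f : (Fin (2 * n) → Bool) → ℕ) (v : ℕ) :
    (dyckPoly n f).coeff v = (univ.filter fun s => isDyck n s ∧ f s = v).card := by
  simp [dyckPoly, finsetSum_coeff, coeff_X_pow, dyckPaths, filter_filter, eq_comm]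

lemma dyckPoly_zero (f : (Fin (2 * 0) → Bool) → ℕ) (s₀ : Fin (2 * 0) → Bool) :
    dyckPoly 0 f = X ^ f s₀ := by
  have : IsEmpty (Fin (2 * 0)) := Fin.isEmpty'
  rw [dyckPoly, dyckPaths, filter_true_of_mem fun s _ => ⟨rfl, fun k hk => by omega⟩,
    Fintype.sum_subsingleton _ s₀]

lemma dyckPoly_evenUps_succ (n : ℕ) :
    dyckPoly (n + 1) (evenUps (n + 1))
      = ∑ x ∈ antidiagonal n, dyckPoly x.1 (oddUps x.1) * dyckPoly x.2 (evenUps x.2) := by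
  rw [dyckPoly, sum_dyckPaths_succ]
  refine sum_congr rfl fun x hx => ?_
  rw [dyckPoly, dyckPoly, sum_mul_sum]
  refine sum_congr rfl fun p _ => sum_congr rfl fun q _ => ?_
  rw [evenUps_elevateAppend p q (HasAntidiagonal.mem_antidiagonal.1 hx), pow_add]

lemma dyckPoly_oddUps_succ (n : ℕ) :
    dyckPoly (n + 1) (oddUps (n + 1))
      = ∑ x ∈ antidiagonal n, X * dyckPoly x.1 (evenUps x.1) * dyckPoly x.2 (oddUps x.2) := by
  rw [dyckPoly, sum_dyckPaths_succ]
  refine sum_congr rfl fun x hx => ?_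
  rw [dyckPoly, dyckPoly, mul_assoc, sum_mul_sum, mul_sum]
  refine sum_congr rfl fun p _ => ?_
  rw [mul_sum]
  refine sum_congr rfl fun q _ => ?_
  rw [oddUps_elevateAppend p q (HasAntidiagonal.mem_antidiagonal.1 hx), pow_add, pow_add, pow_one,
    mul_assoc]

lemma dyckPoly_interiorPeaks_succ (n : ℕ) :
    dyckPoly (n + 1) (interiorPeaks ·)
      = ∑ x ∈ antidiagonal n, dyckPoly x.1 (bPeaks x.1) * dyckPoly x.2 (interiorPeaks ·) := by
  rw [dyckPoly, sum_dyckPaths_succ]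
  refine sum_congr rfl fun x hx => ?_
  rw [dyckPoly, dyckPoly, sum_mul_sum]
  refine sum_congr rfl fun p hp => sum_congr rfl fun q hq => ?_
  rw [interiorPeaks_elevateAppend p q (HasAntidiagonal.mem_antidiagonal.1 hx)
    (mem_dyckPaths.1 hp) (mem_dyckPaths.1 hq), pow_add]

lemma dyckPoly_bPeaks_succ (n : ℕ) :
    dyckPoly (n + 1) (bPeaks (n + 1)) = dyckPoly (n + 1) (interiorPeaks ·) :=
  sum_congr rfl fun _ hs => by rw [bPeaks_eq_interiorPeaks (mem_dyckPaths.1 hs)]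

lemma dyckPoly_oddUps_eq_and_X_mul_dyckPoly_evenUps_eq (n : ℕ) :
    dyckPoly n (oddUps n) = dyckPoly n (interiorPeaks ·)
      ∧ X * dyckPoly n (evenUps n) = dyckPoly n (bPeaks n) := by
  induction n using Nat.strong_induction_on with
  | _ n ih =>
  rcases n with _ | n
  · simp [dyckPoly_zero _ Fin.elim0, evenUps, oddUps, interiorPeaks, bPeaks, extS]
  have hle : ∀ x ∈ antidiagonal n, x.1 < n + 1 ∧ x.2 < n + 1 := fun x hx => by
    have := HasAntidiagonal.mem_antidiagonal.1 hx
    omega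
  constructor
  · rw [dyckPoly_oddUps_succ, dyckPoly_interiorPeaks_succ]
    refine sum_congr rfl fun x hx => ?_
    rw [(ih x.1 (hle x hx).1).2, (ih x.2 (hle x hx).2).1]
  · rw [dyckPoly_bPeaks_succ, dyckPoly_interiorPeaks_succ, dyckPoly_evenUps_succ, mul_sum]
    conv_rhs => rw [← Finset.Nat.sum_antidiagonal_swap]
    refine sum_congr rfl fun x hx => ?_
    rw [Prod.fst_swap, Prod.snd_swap, mul_left_comm, (ih x.1 (hle x hx).1).1,
      (ih x.2 (hle x hx).2).2, mul_comm]

end DyckPath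

theorem stmt15_general (n v : ℕ) (hn : 1 ≤ n) :
    ((Finset.univ : Finset (Fin (2*n) → Bool)).filter
        (fun s => isDyck n s ∧ evenUps n s = v)).card
      = ((Finset.univ : Finset (Fin (2*n) → Bool)).filter
        (fun s => isDyck n s ∧ interiorPeaks s = v + 1)).card := by
  obtain ⟨n, rfl⟩ := Nat.exists_eq_add_of_le' hn
  rw [← DyckPath.coeff_dyckPoly, ← DyckPath.coeff_dyckPoly, ← coeff_X_mul,
    (DyckPath.dyckPoly_oddUps_eq_and_X_mul_dyckPoly_evenUps_eq _).2, DyckPath.dyckPoly_bPeaks_succ]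

theorem stmt15 (n v : ℕ) (hn : 1 ≤ n) (hv : v ≤ n - 1) :
    ((Finset.univ : Finset (Fin (2*n) → Bool)).filter
        (fun s => isDyck n s ∧ evenUps n s = v)).card
      = ((Finset.univ : Finset (Fin (2*n) → Bool)).filter
        (fun s => isDyck n s ∧ interiorPeaks s = v + 1)).card :=
  stmt15_general n v hn
end

section
/- For a Dyck path p of length 2n, under the checkmark bijection the peak-counting weight of the image path satisfies: if p has 2n-2v odd-band edges and 2v even-band edges, then the image has exactly v+1 peaks; equivalently, the generating polynomial identity ∑_{p ∈ D_{2n}} a^{(odd-band edges of p)} b^{(even-band edges of p)} with a=√x, b=1 specializes so that ∑_{v=0}^{n-1} N(n,v) x^{n-v} = ∑_{p ∈ D_{2n}} x^{(number of odd-position up-steps of p)}. -/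
/-!
Read a path of length `2m` two steps at a time. After each pair the height is even, say `2h`,
and the pairs `UU`, `UD`, `DU`, `DD` change `h` by `+1, 0, 0, -1`; `DU` is allowed only when
`h ≥ 1`, and exactly the pairs starting with `U` contribute an up-step at an odd position. So the
number of Dyck prefixes of length `2m` ending at height `2h` with `k` odd-position up-steps obeys
a four-term recursion in `m`, whose solution is the reflection-type formula
`C(m-1, k-1) C(m, k-h) - C(m-1, k) C(m, k-h-1)`. At `h = 0` this is the Narayana number
`N(m, m-k)`.
-/

open Finset
open scoped Classical

def intChoose (n : ℕ) (j : ℤ) : ℤ := if 0 ≤ j then (n.choose j.toNat : ℤ) else 0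

lemma intChoose_of_neg (n : ℕ) {j : ℤ} (h : j < 0) : intChoose n j = 0 := by
  simp [intChoose, not_le.mpr h]

lemma intChoose_natCast (n k : ℕ) : intChoose n k = n.choose k := by
  simp [intChoose]

lemma intChoose_succ (n : ℕ) (j : ℤ) :
    intChoose (n + 1) j = intChoose n j + intChoose n (j - 1) := by
  rcases lt_trichotomy j 0 with hj | rfl | hj
  · simp [intChoose_of_neg, hj, show j - 1 < 0 by omega]
  · simp [intChoose]
  · obtain ⟨i, rfl⟩ : ∃ i : ℕ, j = i + 1 := ⟨j.toNat - 1, by omega⟩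
    rw [add_sub_cancel_right, ← Nat.cast_succ, intChoose_natCast, intChoose_natCast,
      intChoose_natCast, Nat.choose_succ_succ', Nat.cast_add, add_comm]

lemma intChoose_zero (j : ℤ) : intChoose 0 j = if j = 0 then 1 else 0 := by
  rcases lt_trichotomy j 0 with hj | rfl | hj
  · simp [intChoose_of_neg, hj, hj.ne]
  · simp [intChoose]
  · simp [intChoose, hj.le, hj.ne', Nat.choose_eq_zero_of_lt (show 0 < j.toNat by omega)]

def closedCount : ℕ → ℤ → ℤ → ℤ
  | 0, h, k => if h = 0 ∧ k = 0 then 1 else 0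
  | m + 1, h, k =>
      intChoose m (k - 1) * intChoose (m + 1) (k - h)
        - intChoose m k * intChoose (m + 1) (k - h - 1)

lemma closedCount_succ_zero (m : ℕ) (k : ℤ) :
    closedCount (m + 1) 0 k = closedCount m 0 (k - 1) + closedCount m 1 k := by
  cases m with
  | zero =>
    simp only [closedCount, intChoose_succ 0, intChoose_zero, sub_zero, true_and]
    split_ifs <;> omega
  | succ m =>
    simp only [closedCount, intChoose_succ (m + 1), intChoose_succ m]
    ring_nf

lemma closedCount_succ_of_pos (m : ℕ) {h : ℤ} (hh : 1 ≤ h) (k : ℤ) :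
    closedCount (m + 1) h k = closedCount m (h - 1) (k - 1) + closedCount m h (k - 1)
      + closedCount m h k + closedCount m (h + 1) k := by
  cases m with
  | zero =>
    simp only [closedCount, intChoose_succ 0, intChoose_zero]
    split_ifs <;> omega
  | succ m =>
    simp only [closedCount, intChoose_succ (m + 1), intChoose_succ m]
    ring_nf

lemma upsTo_succ_s18 {m : ℕ} (s : Fin m → Bool) (k : ℕ) :
    upsTo s (k + 1) = upsTo s k + (extS s k).toNat := by
  cases hk : extS s k <;> simp [upsTo, range_add_one, filter_insert, hk]

lemma upsTo_congr {m m' : ℕ} {s : Fin m → Bool} {t : Fin m' → Bool} {k : ℕ}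
    (h : ∀ j < k, extS s j = extS t j) : upsTo s k = upsTo t k := by
  unfold upsTo
  congr 1
  exact filter_congr fun j hj => by rw [h j (mem_range.mp hj)]

def dropLastTwo {m : ℕ} (s : Fin (2 * (m + 1)) → Bool) : Fin (2 * m) → Bool :=
  fun i => s ⟨i, by omega⟩

def appendTwo {m : ℕ} (t : Fin (2 * m) → Bool) (b₁ b₂ : Bool) : Fin (2 * (m + 1)) → Bool :=
  fun i => if h : (i : ℕ) < 2 * m then t ⟨i, h⟩ else if (i : ℕ) = 2 * m then b₁ else b₂

section AppendTwo

variable {m : ℕ} (t : Fin (2 * m) → Bool) (b₁ b₂ : Bool)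

lemma extS_appendTwo_of_lt {j : ℕ} (hj : j < 2 * m) : extS (appendTwo t b₁ b₂) j = extS t j := by
  simp [extS, appendTwo, hj, show j < 2 * (m + 1) by omega]

lemma extS_appendTwo_fst : extS (appendTwo t b₁ b₂) (2 * m) = b₁ := by
  simp [extS, appendTwo]

lemma extS_appendTwo_snd : extS (appendTwo t b₁ b₂) (2 * m + 1) = b₂ := by
  simp [extS, appendTwo, show 2 * m + 1 < 2 * (m + 1) by omega]

lemma upsTo_appendTwo_of_le {j : ℕ} (hj : j ≤ 2 * m) :
    upsTo (appendTwo t b₁ b₂) j = upsTo t j :=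
  upsTo_congr fun _ hi => extS_appendTwo_of_lt t b₁ b₂ (by omega)

lemma upsTo_appendTwo_fst :
    upsTo (appendTwo t b₁ b₂) (2 * m + 1) = upsTo t (2 * m) + b₁.toNat := by
  rw [upsTo_succ_s18, extS_appendTwo_fst, upsTo_appendTwo_of_le t b₁ b₂ le_rfl]

lemma upsTo_appendTwo_snd :
    upsTo (appendTwo t b₁ b₂) (2 * (m + 1)) = upsTo t (2 * m) + b₁.toNat + b₂.toNat := by
  show upsTo _ (2 * m + 1 + 1) = _
  rw [upsTo_succ_s18, extS_appendTwo_snd, upsTo_appendTwo_fst]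

lemma oddUps_appendTwo : oddUps (m + 1) (appendTwo t b₁ b₂) = oddUps m t + b₁.toNat := by
  have hcongr : (range (2 * m)).filter (fun j => j % 2 = 0 ∧ extS (appendTwo t b₁ b₂) j = true)
      = (range (2 * m)).filter (fun j => j % 2 = 0 ∧ extS t j = true) :=
    filter_congr fun j hj => by rw [extS_appendTwo_of_lt t b₁ b₂ (mem_range.mp hj)]
  rw [oddUps, oddUps, show range (2 * (m + 1)) = range (2 * m + 1 + 1) from rfl, range_add_one,
    filter_insert, if_neg (by omega), range_add_one, filter_insert, extS_appendTwo_fst, hcongr]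
  cases b₁ <;> simp [card_insert_of_notMem]

end AppendTwo

lemma dropLastTwo_appendTwo {m : ℕ} (t : Fin (2 * m) → Bool) (b₁ b₂ : Bool) :
    dropLastTwo (appendTwo t b₁ b₂) = t := by
  funext i
  simp [dropLastTwo, appendTwo]

lemma appendTwo_dropLastTwo {m : ℕ} (s : Fin (2 * (m + 1)) → Bool) :
    appendTwo (dropLastTwo s) (extS s (2 * m)) (extS s (2 * m + 1)) = s := by
  funext ⟨i, hi⟩
  simp only [appendTwo, dropLastTwo, extS]
  split_ifs <;> first | rfl | omega | (congr; omega)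

def appendTwoEquiv (m : ℕ) : (Fin (2 * m) → Bool) × Bool × Bool ≃ (Fin (2 * (m + 1)) → Bool) where
  toFun p := appendTwo p.1 p.2.1 p.2.2
  invFun s := (dropLastTwo s, extS s (2 * m), extS s (2 * m + 1))
  left_inv p := by
    simp [dropLastTwo_appendTwo, extS_appendTwo_fst, extS_appendTwo_snd]
  right_inv s := appendTwo_dropLastTwo s

lemma card_filter_eq_sum_appendTwo {m : ℕ} (P : (Fin (2 * (m + 1)) → Bool) → Prop)
    [DecidablePred P] :
    #(univ.filter P) = ∑ b₁ : Bool, ∑ b₂ : Bool, #(univ.filter fun t => P (appendTwo t b₁ b₂)) := by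
  simp only [card_filter]
  rw [← (appendTwoEquiv m).sum_comp, Fintype.sum_prod_type, sum_comm]
  simp only [Fintype.sum_prod_type]
  rfl

def IsDyckPrefix {m : ℕ} (s : Fin m → Bool) : Prop := ∀ j ≤ m, j ≤ 2 * upsTo s j

/-- `h` is half the final height. Integer indices keep the recursion in `m` free of truncated
subtraction. -/
noncomputable def dyckPrefixes (m : ℕ) (h k : ℤ) : Finset (Fin (2 * m) → Bool) :=
  univ.filter fun s => (upsTo s (2 * m) : ℤ) = m + h ∧ IsDyckPrefix s ∧ (oddUps m s : ℤ) = k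

section DyckPrefixAppendTwo

variable {m : ℕ} {t : Fin (2 * m) → Bool} {b₁ b₂ : Bool}

lemma isDyckPrefix_appendTwo_iff :
    IsDyckPrefix (appendTwo t b₁ b₂) ↔ IsDyckPrefix t ∧
      2 * m + 1 ≤ 2 * (upsTo t (2 * m) + b₁.toNat) ∧
      2 * (m + 1) ≤ 2 * (upsTo t (2 * m) + b₁.toNat + b₂.toNat) := by
  constructor
  · intro H
    refine ⟨fun j hj => ?_, ?_, ?_⟩
    · rw [← upsTo_appendTwo_of_le t b₁ b₂ hj]
      exact H j (by omega)
    · rw [← upsTo_appendTwo_fst]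
      exact H _ (by omega)
    · rw [← upsTo_appendTwo_snd]
      exact H _ le_rfl
  · rintro ⟨H, h₁, h₂⟩ j hj
    rcases (show j ≤ 2 * m ∨ j = 2 * m + 1 ∨ j = 2 * (m + 1) by omega) with hj | rfl | rfl
    · rw [upsTo_appendTwo_of_le t b₁ b₂ hj]
      exact H j hj
    · rwa [upsTo_appendTwo_fst]
    · rwa [upsTo_appendTwo_snd]

lemma appendTwo_mem_dyckPrefixes_iff {h k : ℤ} (hh : 0 ≤ h) :
    appendTwo t b₁ b₂ ∈ dyckPrefixes (m + 1) h k ↔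
      t ∈ dyckPrefixes m (h + 1 - b₁.toNat - b₂.toNat) (k - b₁.toNat) ∧ (b₂ = true → 1 ≤ h) := by
  simp only [dyckPrefixes, mem_filter, mem_univ, true_and, isDyckPrefix_appendTwo_iff,
    upsTo_appendTwo_snd, oddUps_appendTwo]
  by_cases hP : IsDyckPrefix t
  · have := hP (2 * m) le_rfl
    cases b₁ <;> cases b₂ <;> simp [hP] <;> omega
  · simp [hP]

end DyckPrefixAppendTwo

lemma card_dyckPrefixes_succ (m : ℕ) {h : ℤ} (hh : 0 ≤ h) (k : ℤ) :
    #(dyckPrefixes (m + 1) h k) = (if 1 ≤ h then #(dyckPrefixes m (h - 1) (k - 1)) else 0)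
      + #(dyckPrefixes m h (k - 1)) + (if 1 ≤ h then #(dyckPrefixes m h k) else 0)
      + #(dyckPrefixes m (h + 1) k) := by
  rw [← filter_univ_mem (dyckPrefixes (m + 1) h k), card_filter_eq_sum_appendTwo]
  simp only [appendTwo_mem_dyckPrefixes_iff hh, Fintype.sum_bool]
  split_ifs with h1 <;> simp [h1, add_assoc]

lemma card_dyckPrefixes_zero (h k : ℤ) :
    #(dyckPrefixes 0 h k) = if h = 0 ∧ k = 0 then 1 else 0 := by
  simp only [dyckPrefixes, IsDyckPrefix, upsTo, oddUps]
  split_ifs with hc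
  · simp [hc]
  · simpa [@eq_comm ℤ 0] using hc

lemma card_dyckPrefixes (m : ℕ) {h : ℤ} (hh : 0 ≤ h) (k : ℤ) :
    (#(dyckPrefixes m h k) : ℤ) = closedCount m h k := by
  induction m generalizing h k with
  | zero =>
    rw [card_dyckPrefixes_zero, closedCount]
    split_ifs <;> rfl
  | succ m ih =>
    rw [card_dyckPrefixes_succ m hh]
    rcases hh.eq_or_lt with rfl | hpos
    · simp only [show ¬ (1 : ℤ) ≤ 0 by norm_num, if_false, add_zero, zero_add, Nat.cast_add,
        ih le_rfl, ih zero_le_one, closedCount_succ_zero]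
    · have h1 : 1 ≤ h := hpos
      simp only [h1, if_true, Nat.cast_add, ih hh, ih (by omega : (0 : ℤ) ≤ h + 1),
        ih (by omega : (0 : ℤ) ≤ h - 1), closedCount_succ_of_pos m h1]

lemma closedCount_succ_zero_natCast_add_one (m j : ℕ) (hj : j ≤ m) :
    closedCount (m + 1) 0 (j + 1) = narayana (m + 1) (m - j) := by
  have e₁ : (m.choose (j + 1) : ℤ) * (j + 1) = m.choose j * (m - j) := by
    rw [← Nat.cast_sub hj]; exact_mod_cast Nat.choose_succ_right_eq m j
  have e₂ : ((m + 1).choose (j + 1) : ℤ) * (j + 1) = (m + 1).choose j * (m + 1 - j) := by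
    have := Nat.choose_succ_right_eq (m + 1) j
    zify [show j ≤ m + 1 by omega] at this
    exact this
  have hsymm : narayana (m + 1) (m - j) = (m + 1).choose (j + 1) * m.choose j / (m - j + 1) := by
    rw [narayana, Nat.add_sub_cancel,
      Nat.choose_symm_of_eq_add (by omega : m + 1 = m - j + (j + 1)),
      Nat.choose_symm_of_eq_add (by omega : m = m - j + j)]
  rw [closedCount, sub_zero, add_sub_cancel_right, ← Nat.cast_succ, intChoose_natCast,
    intChoose_natCast, intChoose_natCast, intChoose_natCast, hsymm, Int.natCast_div]
  symm
  apply Int.ediv_eq_of_eq_mul_left (by positivity)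
  apply mul_right_cancel₀ (show (j + 1 : ℤ) ≠ 0 by positivity)
  push_cast [Nat.cast_sub hj]
  linear_combination
    (-(m - j) * m.choose j : ℤ) * e₂ + ((m + 1).choose j * (m - j + 1) : ℤ) * e₁

lemma card_dyckPrefixes_eq_narayana {m v : ℕ} (hv : v ≤ m) :
    #(dyckPrefixes (m + 1) 0 ((m - v + 1 : ℕ) : ℤ)) = narayana (m + 1) v := by
  have := closedCount_succ_zero_natCast_add_one m (m - v) (Nat.sub_le m v)
  rw [Nat.sub_sub_self hv, ← Nat.cast_succ, ← card_dyckPrefixes (m + 1) le_rfl] at this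
  exact_mod_cast this

lemma card_dyckPrefixes_succ_zero_zero (m : ℕ) : #(dyckPrefixes (m + 1) 0 0) = 0 := by
  have := card_dyckPrefixes (m + 1) le_rfl 0
  rw [closedCount, zero_sub, sub_zero, zero_sub, intChoose_of_neg m (j := -1) (by norm_num),
    intChoose_of_neg (m + 1) (j := -1) (by norm_num), zero_mul, mul_zero, sub_zero] at this
  exact_mod_cast this

lemma oddUps_le_upsTo (n : ℕ) (s : Fin (2 * n) → Bool) : oddUps n s ≤ upsTo s (2 * n) :=
  card_le_card fun _ hj => by
    simp only [mem_filter] at hj ⊢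
    exact ⟨hj.1, hj.2.2⟩

lemma filter_isDyck_filter_oddUps_eq (n k : ℕ) :
    ((univ.filter (isDyck n)).filter fun s => oddUps n s = k) = dyckPrefixes n 0 k := by
  ext s
  simp [dyckPrefixes, isDyck, IsDyckPrefix, and_assoc]

lemma sum_isDyck_pow_oddUps {R : Type*} [CommSemiring R] (n : ℕ) (x : R) :
    ∑ s ∈ univ.filter (isDyck n), x ^ oddUps n s
      = ∑ k ∈ range (n + 1), #(dyckPrefixes n 0 k) • x ^ k := by
  have hmaps : ∀ s ∈ univ.filter (isDyck n), oddUps n s ∈ range (n + 1) := fun s hs =>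
    mem_range_succ_iff.mpr ((oddUps_le_upsTo n s).trans (mem_filter.mp hs).2.1.le)
  rw [← sum_fiberwise_of_maps_to hmaps]
  refine sum_congr rfl fun k _ => ?_
  rw [← filter_isDyck_filter_oddUps_eq, ← sum_const]
  exact sum_congr rfl fun s hs => by rw [(mem_filter.mp hs).2]

theorem stmt18 (n : ℕ) (hn : 1 ≤ n) :
    ∑ v ∈ Finset.range n,
        (Polynomial.C (narayana n v) : Polynomial ℕ) * Polynomial.X ^ (n - v)
      = ∑ s ∈ (Finset.univ : Finset (Fin (2*n) → Bool)).filter (fun s => isDyck n s),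
        (Polynomial.X : Polynomial ℕ) ^ (oddUps n s) := by
  obtain ⟨m, rfl⟩ : ∃ m, n = m + 1 := ⟨n - 1, by omega⟩
  symm
  rw [sum_isDyck_pow_oddUps, sum_range_succ', Nat.cast_zero, card_dyckPrefixes_succ_zero_zero,
    zero_smul, add_zero, ← sum_range_reflect]
  refine sum_congr rfl fun v hv => ?_
  have hv : v ≤ m := Nat.lt_succ_iff.mp (mem_range.mp hv)
  rw [show m + 1 - 1 - v + 1 = m - v + 1 by omega, card_dyckPrefixes_eq_narayana hv,
    Polynomial.smul_eq_C_mul, show m - v + 1 = m + 1 - v by omega]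
end
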